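/- arXiv:1302.2441 — 7 statements merged into one kernel-verified Lean document; each statement's English description precedes it below -/
import Mathlib

section
/- Let n and m be positive integers and let (k_{i,j})_{1≤i≤j≤n} be a family of integers with 0 ≤ k_{i,j} ≤ m for all i ≤ j. Then there exists a point x ∈ ℝ^{n+1} such that for all 1 ≤ i ≤ j ≤ n one has k_{i,j} < x_i − x_{j+1} < k_{i,j} + 1 whenever k_{i,j} < m, and x_i − x_{j+1} > m whenever k_{i,j} = m, if and only if the family (k_{i,j}) satisfies the Shi conditions: for all 1 ≤ i ≤ ℓ < j ≤ n, if k_{i,ℓ} + k_{ℓ+1,j} < m then k_{i,j} − (k_{i,ℓ} + k_{ℓ+1,j}) ∈ {0,1}, and if k_{i,ℓ} + k_{ℓ+1,j} ≥ m then k_{i,j} = m. -/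
/-- The Shi conditions for a triangular family `(k_{i,j})_{1 ≤ i ≤ j ≤ n}` of integers:
for all `1 ≤ i ≤ ℓ < j ≤ n`, if `k_{i,ℓ} + k_{ℓ+1,j} < m` then
`k_{i,j} − (k_{i,ℓ} + k_{ℓ+1,j}) ∈ {0,1}`, and if `k_{i,ℓ} + k_{ℓ+1,j} ≥ m` then `k_{i,j} = m`. -/
def ShiConditions (n m : ℕ) (k : ℕ → ℕ → ℤ) : Prop :=
  ∀ i l j : ℕ, 1 ≤ i → i ≤ l → l < j → j ≤ n →
    (k i l + k (l + 1) j < (m : ℤ) →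
      k i j - (k i l + k (l + 1) j) = 0 ∨ k i j - (k i l + k (l + 1) j) = 1) ∧
    ((m : ℤ) ≤ k i l + k (l + 1) j → k i j = (m : ℤ))

open Fin.NatCast

lemma fin_cast_ne {n a b : ℕ} (ha : a < n + 1) (hb : b < n + 1) (hab : a ≠ b) :
    (a : Fin (n + 1)) ≠ (b : Fin (n + 1)) := by
  intro h
  apply hab
  have := congrArg Fin.val h
  rwa [Fin.val_cast_of_lt ha, Fin.val_cast_of_lt hb] at this

lemma shi_aux_exists (n m : ℕ) (k : ℕ → ℕ → ℤ)
    (hk : ∀ i j : ℕ, 1 ≤ i → i ≤ j → j ≤ n → 0 ≤ k i j ∧ k i j ≤ (m : ℤ))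
    (hs : ShiConditions n m k) :
    ∀ J : ℕ, J ≤ n → ∃ x : Fin (n + 1) → ℝ,
      ∀ i j : ℕ, 1 ≤ i → i ≤ j → j ≤ J →
        (k i j < (m : ℤ) →
          ((k i j : ℝ) < x ((i - 1 : ℕ) : Fin (n + 1)) - x ((j : ℕ) : Fin (n + 1)) ∧
            x ((i - 1 : ℕ) : Fin (n + 1)) - x ((j : ℕ) : Fin (n + 1)) < (k i j : ℝ) + 1)) ∧
        (k i j = (m : ℤ) →
          (m : ℝ) < x ((i - 1 : ℕ) : Fin (n + 1)) - x ((j : ℕ) : Fin (n + 1))) := by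
  intro J
  induction J with
  | zero =>
    intro _
    exact ⟨0, fun i j hi hij hj => absurd hj (by omega)⟩
  | succ J ih =>
    intro hJn
    obtain ⟨x, hx⟩ := ih (by omega)
    set D : ℕ → ℝ := fun i => x ((i - 1 : ℕ) : Fin (n + 1)) - x ((J : ℕ) : Fin (n + 1))
      with hD
    set a : ℕ → ℝ := fun i => (k i (J + 1) : ℝ) - D i with ha
    -- the lower bound from the induction hypothesis, uniform in the two cases
    have low : ∀ p q : ℕ, 1 ≤ p → p ≤ q → q ≤ J →
        (k p q : ℝ) < x ((p - 1 : ℕ) : Fin (n + 1)) - x ((q : ℕ) : Fin (n + 1)) := by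
      intro p q hp hpq hq
      have hkb := hk p q hp hpq (by omega)
      rcases lt_or_eq_of_le hkb.2 with h | h
      · exact ((hx p q hp hpq hq).1 h).1
      · have := (hx p q hp hpq hq).2 h
        rw [h]; push_cast; exact this
    -- key inequality: the candidate intervals pairwise intersect
    have hkey : ∀ p ∈ Finset.Icc 1 (J + 1), ∀ q ∈ Finset.Icc 1 (J + 1),
        k q (J + 1) < (m : ℤ) → a p < a q + 1 := by
      intro p hp q hq hqm
      rw [Finset.mem_Icc] at hp hq
      rcases lt_trichotomy p q with hpq | hpq | hpq
      · -- p < q : use Shi at (p, q-1, J+1)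
        have h1 := hs p (q - 1) (J + 1) hp.1 (by omega) (by omega) hJn
        have hq1 : q - 1 + 1 = q := by omega
        rw [hq1] at h1
        have hkpq := hk p (q - 1) hp.1 (by omega) (by omega)
        have hkq := hk q (J + 1) hq.1 (by omega) hJn
        have hkp := hk p (J + 1) hp.1 (by omega) hJn
        have hint : k p (J + 1) - k q (J + 1) - 1 ≤ k p (q - 1) := by
          rcases lt_or_ge (k p (q - 1) + k q (J + 1)) (m : ℤ) with h | h
          · rcases h1.1 h with e | e <;> omega
          · have := h1.2 h; omega
        have hreal : (k p (q - 1) : ℝ) < D p - D q := by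
          have hDe : D p - D q
              = x ((p - 1 : ℕ) : Fin (n + 1)) - x ((q - 1 : ℕ) : Fin (n + 1)) := by
            simp only [hD]; ring
          rw [hDe]
          exact low p (q - 1) hp.1 (by omega) (by omega)
        have hintR : (k p (J + 1) : ℝ) - (k q (J + 1) : ℝ) - 1 ≤ (k p (q - 1) : ℝ) := by
          exact_mod_cast hint
        simp only [ha]
        linarith
      · subst hpq; linarith
      · -- q < p : use Shi at (q, p-1, J+1)
        have h1 := hs q (p - 1) (J + 1) hq.1 (by omega) (by omega) hJn
        have hp1 : p - 1 + 1 = p := by omega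
        rw [hp1] at h1
        have hkqp := hk q (p - 1) hq.1 (by omega) (by omega)
        have hkp := hk p (J + 1) hp.1 (by omega) hJn
        have hsum : k q (p - 1) + k p (J + 1) < (m : ℤ) := by
          by_contra h
          push_neg at h
          have := h1.2 h
          omega
        have hd := h1.1 hsum
        have hint : k p (J + 1) + k q (p - 1) ≤ k q (J + 1) := by
          rcases hd with e | e <;> omega
        have hkqpm : k q (p - 1) < (m : ℤ) := by omega
        have hreal : x ((q - 1 : ℕ) : Fin (n + 1)) - x ((p - 1 : ℕ) : Fin (n + 1))
            < (k q (p - 1) : ℝ) + 1 :=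
          ((hx q (p - 1) hq.1 (by omega) (by omega)).1 hkqpm).2
        have hreal' : D q - D p < (k q (p - 1) : ℝ) + 1 := by
          have hDe : D q - D p
              = x ((q - 1 : ℕ) : Fin (n + 1)) - x ((p - 1 : ℕ) : Fin (n + 1)) := by
            simp only [hD]; ring
          rw [hDe]; exact hreal
        have hintR : (k p (J + 1) : ℝ) + (k q (p - 1) : ℝ) ≤ (k q (J + 1) : ℝ) := by
          exact_mod_cast hint
        simp only [ha]
        linarith
    have hne : (Finset.Icc 1 (J + 1)).Nonempty := ⟨1, by simp⟩
    set A := (Finset.Icc 1 (J + 1)).sup' hne a with hA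
    set T := ((Finset.Icc 1 (J + 1)).filter (fun q => k q (J + 1) < (m : ℤ))).image
      (fun q => a q + 1) with hT
    set B := (insert (A + 1) T).min' (Finset.insert_nonempty _ _) with hB
    have hAB : A < B := by
      rw [hB]
      apply (Finset.lt_min'_iff _ _).mpr
      intro y hy
      rcases Finset.mem_insert.mp hy with h | h
      · rw [h]; linarith
      · obtain ⟨q, hqmem, rfl⟩ := Finset.mem_image.mp h
        obtain ⟨hq1, hq2⟩ := Finset.mem_filter.mp hqmem
        exact (Finset.sup'_lt_iff hne).mpr (fun p hp => hkey p hp q hq1 hq2)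
    set c := (A + B) / 2 with hc
    have hcA : A < c := by rw [hc]; linarith
    have hcB : c < B := by rw [hc]; linarith
    set x' := Function.update x ((J + 1 : ℕ) : Fin (n + 1))
      (x ((J : ℕ) : Fin (n + 1)) - c) with hx'
    refine ⟨x', ?_⟩
    intro i j hi hij hjJ
    rcases Nat.lt_or_ge j (J + 1) with hcase | hcase
    · -- j ≤ J : the old point still works
      have e1 : x' ((i - 1 : ℕ) : Fin (n + 1)) = x ((i - 1 : ℕ) : Fin (n + 1)) :=
        Function.update_of_ne (fin_cast_ne (by omega) (by omega) (by omega)) _ _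
      have e2 : x' ((j : ℕ) : Fin (n + 1)) = x ((j : ℕ) : Fin (n + 1)) :=
        Function.update_of_ne (fin_cast_ne (by omega) (by omega) (by omega)) _ _
      rw [e1, e2]
      exact hx i j hi hij (by omega)
    · -- j = J + 1
      have hj : j = J + 1 := by omega
      subst hj
      have e1 : x' ((i - 1 : ℕ) : Fin (n + 1)) = x ((i - 1 : ℕ) : Fin (n + 1)) :=
        Function.update_of_ne (fin_cast_ne (by omega) (by omega) (by omega)) _ _
      have e2 : x' ((J + 1 : ℕ) : Fin (n + 1)) = x ((J : ℕ) : Fin (n + 1)) - c :=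
        Function.update_self _ _ _
      have keyd : x' ((i - 1 : ℕ) : Fin (n + 1)) - x' ((J + 1 : ℕ) : Fin (n + 1))
          = D i + c := by
        rw [e1, e2]; simp only [hD]; ring
      have himem : i ∈ Finset.Icc 1 (J + 1) := Finset.mem_Icc.mpr ⟨hi, hij⟩
      have haiA : a i ≤ A := Finset.le_sup' a himem
      have hai : a i = (k i (J + 1) : ℝ) - D i := by simp only [ha]
      constructor
      · intro hkm
        have hmemT : a i + 1 ∈ insert (A + 1) T :=
          Finset.mem_insert_of_mem
            (Finset.mem_image_of_mem _ (Finset.mem_filter.mpr ⟨himem, hkm⟩))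
        have hBle : B ≤ a i + 1 := Finset.min'_le _ _ hmemT
        rw [keyd]
        constructor
        · rw [hai] at haiA; linarith
        · rw [hai] at hBle; linarith
      · intro hkm
        rw [keyd]
        rw [hkm] at hai
        push_cast at hai
        rw [hai] at haiA
        linarith

/-- There is a point `x ∈ ℝ^{n+1}` with `k_{i,j} < x_i − x_{j+1} < k_{i,j} + 1` whenever
`k_{i,j} < m` and `x_i − x_{j+1} > m` whenever `k_{i,j} = m` (for all `1 ≤ i ≤ j ≤ n`),
iff the family `(k_{i,j})` satisfies the Shi conditions. -/
theorem shi_tableau_iff_region (n m : ℕ) (hn : 1 ≤ n) (hm : 1 ≤ m)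
    (k : ℕ → ℕ → ℤ)
    (hk : ∀ i j : ℕ, 1 ≤ i → i ≤ j → j ≤ n → 0 ≤ k i j ∧ k i j ≤ (m : ℤ)) :
    (∃ x : Fin (n + 1) → ℝ,
      ∀ i j : ℕ, 1 ≤ i → i ≤ j → j ≤ n →
        (k i j < (m : ℤ) →
          ((k i j : ℝ) < x ((i - 1 : ℕ) : Fin (n + 1)) - x ((j : ℕ) : Fin (n + 1)) ∧
            x ((i - 1 : ℕ) : Fin (n + 1)) - x ((j : ℕ) : Fin (n + 1)) < (k i j : ℝ) + 1)) ∧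
        (k i j = (m : ℤ) →
          (m : ℝ) < x ((i - 1 : ℕ) : Fin (n + 1)) - x ((j : ℕ) : Fin (n + 1)))) ↔
    ShiConditions n m k := by
  constructor
  · rintro ⟨x, hx⟩
    intro i l j hi hil hlj hjn
    have hki_l := hk i l hi hil (by omega)
    have hkl_j := hk (l + 1) j (by omega) (by omega) hjn
    have hkij := hk i j hi (by omega) hjn
    have h1 := hx i l hi hil (by omega)
    have h2 := hx (l + 1) j (by omega) (by omega) hjn
    have h3 := hx i j hi (by omega) hjn
    have hll : (l + 1 - 1 : ℕ) = l := by omega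
    rw [hll] at h2
    set d1 := x ((i - 1 : ℕ) : Fin (n + 1)) - x ((l : ℕ) : Fin (n + 1)) with hd1
    set d2 := x ((l : ℕ) : Fin (n + 1)) - x ((j : ℕ) : Fin (n + 1)) with hd2
    have hsplit : x ((i - 1 : ℕ) : Fin (n + 1)) - x ((j : ℕ) : Fin (n + 1)) = d1 + d2 := by
      rw [hd1, hd2]; ring
    rw [hsplit] at h3
    -- uniform lower bounds
    have low1 : (k i l : ℝ) < d1 := by
      rcases lt_or_eq_of_le hki_l.2 with h | h
      · exact (h1.1 h).1
      · have := h1.2 h; rw [h]; push_cast; exact this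
    have low2 : (k (l + 1) j : ℝ) < d2 := by
      rcases lt_or_eq_of_le hkl_j.2 with h | h
      · exact (h2.1 h).1
      · have := h2.2 h; rw [h]; push_cast; exact this
    constructor
    · intro hsum
      have hilm : k i l < (m : ℤ) := by omega
      have hljm : k (l + 1) j < (m : ℤ) := by omega
      have hup1 : d1 < (k i l : ℝ) + 1 := (h1.1 hilm).2
      have hup2 : d2 < (k (l + 1) j : ℝ) + 1 := (h2.1 hljm).2
      rcases lt_or_eq_of_le hkij.2 with h | h
      · have hb1 : (k i j : ℝ) < d1 + d2 := (h3.1 h).1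
        have hb2 : d1 + d2 < (k i j : ℝ) + 1 := (h3.1 h).2
        have e1 : (k i j : ℝ) < (k i l : ℝ) + (k (l + 1) j : ℝ) + 2 := by linarith
        have e2 : (k i l : ℝ) + (k (l + 1) j : ℝ) < (k i j : ℝ) + 1 := by linarith
        have e1' : k i j < k i l + k (l + 1) j + 2 := by exact_mod_cast e1
        have e2' : k i l + k (l + 1) j < k i j + 1 := by exact_mod_cast e2
        omega
      · have hb1 : (m : ℝ) < d1 + d2 := h3.2 h
        have e1 : (m : ℝ) < (k i l : ℝ) + (k (l + 1) j : ℝ) + 2 := by linarith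
        have e1' : (m : ℤ) < k i l + k (l + 1) j + 2 := by exact_mod_cast e1
        omega
    · intro hsum
      rcases lt_or_eq_of_le hkij.2 with h | h
      · exfalso
        have hb2 : d1 + d2 < (k i j : ℝ) + 1 := (h3.1 h).2
        have e1 : (m : ℝ) ≤ (k i l : ℝ) + (k (l + 1) j : ℝ) := by exact_mod_cast hsum
        have e2 : (k i j : ℝ) + 1 ≤ (m : ℝ) := by
          have : k i j + 1 ≤ (m : ℤ) := by omega
          exact_mod_cast this
        linarith
      · exact h
  · intro hs
    obtain ⟨x, hx⟩ := shi_aux_exists n m k hk hs n le_rfl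
    exact ⟨x, fun i j hi hij hj => hx i j hi hij hj⟩
end

section
/- For every λ ∈ P^m_n and every 1 ≤ i ≤ n, one has λ_i = Σ_{j=i}^{n} k_{i,j}(λ); that is, the row sums of the recursively defined tableau of λ recover the parts of λ. -/
/-- `lam` (indexed `1,…,n`) is a type-A partition of size `(n,m)`:
weakly decreasing with `0 ≤ lam i ≤ m (n - i + 1)` for `1 ≤ i ≤ n`. -/
def IsTypeAPartition (n m : ℕ) (lam : ℕ → ℤ) : Prop :=
  (∀ i : ℕ, 1 ≤ i → i ≤ n → 0 ≤ lam i ∧ lam i ≤ (m : ℤ) * ((n : ℤ) - (i : ℤ) + 1)) ∧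
  (∀ i : ℕ, 1 ≤ i → i < n → lam (i + 1) ≤ lam i)

/-- `K` satisfies, on the triangular domain `1 ≤ i ≤ j ≤ n`, the defining recursion of
the entries `k_{i,j}(lam)`:
`k_{i,j} = min(m, ⌈(lam_i − Σ_{l=j+1}^n k_{i,l} + Σ_{l=i+1}^j k_{l,j})/(j−i+1)⌉)`.
(This recursion is well founded and determines `K` uniquely on the domain.) -/
def TableauRec (n m : ℕ) (lam : ℕ → ℤ) (K : ℕ → ℕ → ℤ) : Prop :=
  ∀ i j : ℕ, 1 ≤ i → i ≤ j → j ≤ n →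
    K i j = min (m : ℤ)
      ⌈(((lam i - ∑ l ∈ Finset.Icc (j + 1) n, K i l
          + ∑ l ∈ Finset.Icc (i + 1) j, K l j : ℤ) : ℚ)
        / ((j : ℚ) - (i : ℚ) + 1))⌉

/-- Remaining amount of row `i` after columns `j+1, …, n` have been filled. -/
def Rrem (n : ℕ) (lam : ℕ → ℤ) (K : ℕ → ℕ → ℤ) (i j : ℕ) : ℤ :=
  lam i - ∑ l ∈ Finset.Icc (j + 1) n, K i l

lemma ceil_div_le_of_le (a D y : ℤ) (hD : (0:ℤ) < D) (h : a ≤ D * y) :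
    ⌈(a:ℚ)/(D:ℚ)⌉ ≤ y := by
  rw [Int.ceil_le, div_le_iff₀ (by exact_mod_cast hD)]
  exact_mod_cast h.trans_eq (mul_comm D y)

lemma le_mul_ceil_div (a D : ℤ) (hD : (0:ℤ) < D) : a ≤ D * ⌈(a:ℚ)/(D:ℚ)⌉ := by
  have h := Int.le_ceil ((a:ℚ)/(D:ℚ))
  rw [div_le_iff₀ (by exact_mod_cast hD : (0:ℚ) < (D:ℚ))] at h
  exact_mod_cast h.trans_eq (mul_comm _ _)

lemma ceil_div_nonneg (a D : ℤ) (hD : (0:ℤ) < D) (ha : 0 ≤ a) :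
    0 ≤ ⌈(a:ℚ)/(D:ℚ)⌉ :=
  Int.ceil_nonneg (div_nonneg (by exact_mod_cast ha) (by exact_mod_cast hD.le))

lemma sum_Icc_split (f : ℕ → ℤ) (a b : ℕ) (h : a ≤ b) :
    ∑ l ∈ Finset.Icc a b, f l = f a + ∑ l ∈ Finset.Icc (a+1) b, f l := by
  rw [Finset.Icc_add_one_left_eq_Ioc, ← Finset.Ioc_insert_left h, Finset.sum_insert Finset.left_notMem_Ioc]

/-- The master invariant, proved by strong induction on `2n - i - j`. -/
lemma tableau_master (n m : ℕ) (hm : 1 ≤ m) (lam : ℕ → ℤ)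
    (hlam : IsTypeAPartition n m lam) (K : ℕ → ℕ → ℤ) (hK : TableauRec n m lam K) :
    ∀ u i j : ℕ, 1 ≤ i → i ≤ j → j ≤ n → 2*n ≤ u + i + j →
      (0 ≤ K i j ∧ K i j ≤ (m:ℤ)) ∧
      (K i j ≤ Rrem n lam K i j ∧ Rrem n lam K i j ≤ K i j + (m:ℤ) * ((j:ℤ) - i)) ∧
      (0 ≤ Rrem n lam K i j ∧ Rrem n lam K i j ≤ (m:ℤ) * ((j:ℤ) - i + 1)) ∧
      (i < j → Rrem n lam K (i+1) j ≤ Rrem n lam K i j ∧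
        K i j - K (i+1) j ≤ Rrem n lam K i j - Rrem n lam K (i+1) j) := by
  intro u
  induction u using Nat.strong_induction_on with
  | _ u ih =>
  intro i j hi hij hjn hu
  -- induction hypothesis for all pairs of strictly larger index sum
  have hM' : ∀ i' j' : ℕ, 1 ≤ i' → i' ≤ j' → j' ≤ n → i + j < i' + j' →
      (0 ≤ K i' j' ∧ K i' j' ≤ (m:ℤ)) ∧
      (K i' j' ≤ Rrem n lam K i' j' ∧ Rrem n lam K i' j' ≤ K i' j' + (m:ℤ) * ((j':ℤ) - i')) ∧
      (0 ≤ Rrem n lam K i' j' ∧ Rrem n lam K i' j' ≤ (m:ℤ) * ((j':ℤ) - i' + 1)) ∧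
      (i' < j' → Rrem n lam K (i'+1) j' ≤ Rrem n lam K i' j' ∧
        K i' j' - K (i'+1) j' ≤ Rrem n lam K i' j' - Rrem n lam K (i'+1) j') := by
    intro i' j' h1 h2 h3 h4
    have hu1 : 1 ≤ u := by omega
    exact ih (u-1) (by omega) i' j' h1 h2 h3 (by omega)
  -- (e): bounds on the remaining amount R i j
  have hRe : 0 ≤ Rrem n lam K i j ∧ Rrem n lam K i j ≤ (m:ℤ) * ((j:ℤ) - i + 1) := by
    rcases eq_or_lt_of_le hjn with hjn' | hjn'
    · subst hjn'
      have hempty : Finset.Icc (j+1) j = ∅ := Finset.Icc_eq_empty (by omega)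
      unfold Rrem
      simp only [hempty, Finset.sum_empty, sub_zero]
      exact hlam.1 i hi hij
    · have hsplit : Rrem n lam K i j = Rrem n lam K i (j+1) - K i (j+1) := by
        unfold Rrem
        rw [sum_Icc_split (fun l => K i l) (j+1) n (by omega)]
        ring
      obtain ⟨_, ⟨hb', hc'⟩, _, _⟩ := hM' i (j+1) hi (by omega) (by omega) (by omega)
      constructor
      · rw [hsplit]; linarith
      · rw [hsplit]
        have : (m:ℤ) * ((j:ℤ) + 1 - i) = (m:ℤ) * ((j:ℤ) - i + 1) := by ring
        push_cast at hc'
        linarith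
  -- (f): R (i+1) j ≤ R i j for i < j
  have hRf : i < j → Rrem n lam K (i+1) j ≤ Rrem n lam K i j := by
    intro hij'
    rcases eq_or_lt_of_le hjn with hjn' | hjn'
    · subst hjn'
      have hempty : Finset.Icc (j+1) j = ∅ := Finset.Icc_eq_empty (by omega)
      unfold Rrem
      simp only [hempty, Finset.sum_empty, sub_zero]
      exact hlam.2 i hi hij'
    · have hsplit1 : Rrem n lam K i j = Rrem n lam K i (j+1) - K i (j+1) := by
        unfold Rrem
        rw [sum_Icc_split (fun l => K i l) (j+1) n (by omega)]; ring
      have hsplit2 : Rrem n lam K (i+1) j = Rrem n lam K (i+1) (j+1) - K (i+1) (j+1) := by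
        unfold Rrem
        rw [sum_Icc_split (fun l => K (i+1) l) (j+1) n (by omega)]; ring
      obtain ⟨_, _, _, hd'⟩ := hM' i (j+1) hi (by omega) (by omega) (by omega)
      obtain ⟨_, hd2'⟩ := hd' (by omega)
      rw [hsplit1, hsplit2]
      linarith
  -- chain of (f): R l j ≤ R i j for all i ≤ l ≤ j
  have hchain : ∀ l, i ≤ l → l ≤ j → Rrem n lam K l j ≤ Rrem n lam K i j := by
    intro l hl1
    induction l, hl1 using Nat.le_induction with
    | base => intro _; exact le_refl _
    | succ l hl ihl =>
      intro hl2
      have hstep : Rrem n lam K (l+1) j ≤ Rrem n lam K l j := by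
        rcases eq_or_lt_of_le hl with h | h
        · subst h; exact hRf (by omega)
        · exact ((hM' l j (by omega) (by omega) hjn (by omega)).2.2.2 (by omega)).1
      exact hstep.trans (ihl (by omega))
  -- nonnegativity and upper bound on the column sum C
  have hC0 : 0 ≤ ∑ l ∈ Finset.Icc (i+1) j, K l j := by
    apply Finset.sum_nonneg
    intro l hl
    rw [Finset.mem_Icc] at hl
    exact ((hM' l j (by omega) hl.2 hjn (by omega)).1).1
  have hCle : ∑ l ∈ Finset.Icc (i+1) j, K l j ≤ ((j:ℤ) - i) * Rrem n lam K i j := by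
    have h := Finset.sum_le_card_nsmul (Finset.Icc (i+1) j) (fun l => K l j)
      (Rrem n lam K i j) ?_
    · rw [Nat.card_Icc] at h
      have hcast : ((j + 1 - (i+1) : ℕ) : ℤ) = (j:ℤ) - i := by omega
      rw [nsmul_eq_mul, hcast] at h
      exact h
    · intro l hl
      rw [Finset.mem_Icc] at hl
      exact le_trans ((hM' l j (by omega) hl.2 hjn (by omega)).2.1).1
        (hchain l (by omega) hl.2)
  -- the recursion, in convenient form
  have hDpos : (0:ℤ) < (j:ℤ) - i + 1 := by
    have : (i:ℤ) ≤ (j:ℤ) := by exact_mod_cast hij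
    omega
  have hrec : K i j = min (m:ℤ)
      ⌈((Rrem n lam K i j + ∑ l ∈ Finset.Icc (i+1) j, K l j : ℤ) : ℚ)
        / ((((j:ℤ) - i + 1 : ℤ)) : ℚ)⌉ := by
    rw [hK i j hi hij hjn]
    have h1 : (lam i - ∑ l ∈ Finset.Icc (j + 1) n, K i l
        + ∑ l ∈ Finset.Icc (i + 1) j, K l j : ℤ)
        = Rrem n lam K i j + ∑ l ∈ Finset.Icc (i+1) j, K l j := by
      unfold Rrem; ring
    have h2 : ((j : ℚ) - (i : ℚ) + 1) = (((j:ℤ) - i + 1 : ℤ) : ℚ) := by push_cast; ring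
    rw [h1, h2]
  set R : ℤ := Rrem n lam K i j with hRdef
  set C : ℤ := ∑ l ∈ Finset.Icc (i+1) j, K l j with hCdef
  set c : ℤ := ⌈((R + C : ℤ) : ℚ) / ((((j:ℤ) - i + 1 : ℤ)) : ℚ)⌉ with hcdef
  have hkm : K i j ≤ (m:ℤ) := by rw [hrec]; exact min_le_left _ _
  have hkc : K i j ≤ c := by rw [hrec]; exact min_le_right _ _
  have hk0 : 0 ≤ K i j := by
    rw [hrec]
    refine le_min (by positivity) ?_
    exact ceil_div_nonneg _ _ hDpos (add_nonneg hRe.1 hC0)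
  -- (b): K i j ≤ R
  have hb : K i j ≤ R := by
    refine hkc.trans (ceil_div_le_of_le _ _ _ hDpos ?_)
    nlinarith [hCle]
  -- (c): R ≤ K i j + m (j - i)
  have hc : R ≤ K i j + (m:ℤ) * ((j:ℤ) - i) := by
    rcases le_total (m:ℤ) c with h | h
    · have hKm : K i j = m := by rw [hrec]; exact min_eq_left h
      rw [hKm]
      nlinarith [hRe.2]
    · have hKc : K i j = c := by rw [hrec]; exact min_eq_right h
      have h1 : (R + C : ℤ) ≤ ((j:ℤ) - i + 1) * c := le_mul_ceil_div _ _ hDpos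
      have hc0 : 0 ≤ c := hKc ▸ hk0
      have hD1 : (0:ℤ) ≤ (j:ℤ) - i := by
        have : (i:ℤ) ≤ (j:ℤ) := by exact_mod_cast hij
        omega
      rw [hKc]
      nlinarith [mul_le_mul_of_nonneg_left h hD1, hC0]
  refine ⟨⟨hk0, hkm⟩, ⟨hb, hc⟩, hRe, ?_⟩
  -- (d)
  intro hij'
  refine ⟨hRf hij', ?_⟩
  set R' : ℤ := Rrem n lam K (i+1) j with hR'def
  set C' : ℤ := ∑ l ∈ Finset.Icc (i+1+1) j, K l j with hC'def
  have hD'pos : (0:ℤ) < (j:ℤ) - i := by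
    have : (i:ℤ) < (j:ℤ) := by exact_mod_cast hij'
    omega
  have hrec' : K (i+1) j = min (m:ℤ)
      ⌈((R' + C' : ℤ) : ℚ) / ((((j:ℤ) - i : ℤ)) : ℚ)⌉ := by
    rw [hK (i+1) j (by omega) (by omega) hjn]
    have h1 : (lam (i+1) - ∑ l ∈ Finset.Icc (j + 1) n, K (i+1) l
        + ∑ l ∈ Finset.Icc (i + 1 + 1) j, K l j : ℤ) = R' + C' := by
      rw [hR'def, hC'def]; unfold Rrem; ring
    have h2 : ((j : ℚ) - ((i+1 : ℕ) : ℚ) + 1) = (((j:ℤ) - i : ℤ) : ℚ) := by push_cast; ring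
    rw [h1, h2]
  have hCsplit : C = K (i+1) j + C' := by
    rw [hCdef, hC'def]
    exact sum_Icc_split (fun l => K l j) (i+1) j (by omega)
  set c' : ℤ := ⌈((R' + C' : ℤ) : ℚ) / ((((j:ℤ) - i : ℤ)) : ℚ)⌉ with hc'def
  rcases le_total (m:ℤ) c' with h | h
  · have hKm' : K (i+1) j = m := by rw [hrec']; exact min_eq_left h
    have := hRf hij'
    rw [hKm']
    linarith
  · have hKc' : K (i+1) j = c' := by rw [hrec']; exact min_eq_right h
    have h1' : (R' + C' : ℤ) ≤ ((j:ℤ) - i) * c' := le_mul_ceil_div _ _ hD'pos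
    have hRR' : R' ≤ R := hRf hij'
    have hcle : c ≤ R - R' + K (i+1) j := by
      apply ceil_div_le_of_le _ _ _ hDpos
      rw [hCsplit, hKc']
      nlinarith [mul_nonneg (sub_nonneg.2 hRR') hD'pos.le]
    linarith [hkc]

/-- For every type-A partition in `P^m_n` and every `1 ≤ i ≤ n`, the `i`-th row sum of
the recursively defined tableau recovers the `i`-th part:
`lam_i = Σ_{j=i}^n k_{i,j}(lam)`. -/
theorem rowSums_recover_partition (n m : ℕ) (hn : 1 ≤ n) (hm : 1 ≤ m)
    (lam : ℕ → ℤ) (hlam : IsTypeAPartition n m lam)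
    (K : ℕ → ℕ → ℤ) (hK : TableauRec n m lam K) :
    ∀ i : ℕ, 1 ≤ i → i ≤ n → lam i = ∑ j ∈ Finset.Icc i n, K i j := by
  intro i hi1 hin
  obtain ⟨_, ⟨hb, hc⟩, _, _⟩ :=
    tableau_master n m hm lam hlam K hK (2*n) i i hi1 le_rfl hin (by omega)
  have hRK : Rrem n lam K i i = K i i := by
    have : (m:ℤ) * ((i:ℤ) - i) = 0 := by ring
    refine le_antisymm (by linarith) hb
  rw [sum_Icc_split (fun l => K i l) i n hin]
  have : Rrem n lam K i i = lam i - ∑ l ∈ Finset.Icc (i+1) n, K i l := rfl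
  linarith [hRK, this]
end

section
/- The map φ̄_n sending each λ ∈ P^m_n to the family of integers (k_{i,j}(λ))_{1≤i≤j≤n} is injective. -/
lemma sum_Icc_left' {a b : ℕ} (h : a ≤ b) (f : ℕ → ℤ) :
    ∑ l ∈ Finset.Icc a b, f l = f a + ∑ l ∈ Finset.Icc (a + 1) b, f l := by
  have : Finset.Icc a b = insert a (Finset.Icc (a + 1) b) := by
    ext x; simp only [Finset.mem_Icc, Finset.mem_insert]; omega
  rw [this, Finset.sum_insert (by simp)]

lemma ceil_intDiv_le {N D c : ℤ} (hD : 0 < D) (h : N ≤ c * D) :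
    ⌈(N : ℚ) / (D : ℚ)⌉ ≤ c := by
  rw [Int.ceil_le, div_le_iff₀ (by exact_mod_cast hD)]
  exact_mod_cast h

lemma le_ceil_intDiv {N D c : ℤ} (hD : 0 < D) (h : c * D < N + D) :
    c ≤ ⌈(N : ℚ) / (D : ℚ)⌉ := by
  have hDQ : (0:ℚ) < (D:ℚ) := by exact_mod_cast hD
  have h1 : (c - 1) * D < N := by nlinarith
  have h2 : (((c - 1 : ℤ)) : ℚ) < (N : ℚ) / (D : ℚ) := by
    rw [lt_div_iff₀ hDQ]
    exact_mod_cast h1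
  have h3 := Int.lt_ceil.mpr h2
  omega

lemma intDiv_le_ceil {N D : ℤ} (hD : 0 < D) : N ≤ ⌈(N : ℚ) / (D : ℚ)⌉ * D := by
  have h := Int.le_ceil ((N : ℚ) / (D : ℚ))
  rw [div_le_iff₀ (by exact_mod_cast hD : (0:ℚ) < (D:ℚ))] at h
  exact_mod_cast h

lemma tableau_key (n m : ℕ) (hm : 1 ≤ m) (lam : ℕ → ℤ)
    (h : IsTypeAPartition n m lam) (K : ℕ → ℕ → ℤ) (hK : TableauRec n m lam K) :
    ∀ t i j : ℕ, 1 ≤ i → i ≤ j → j ≤ n → 2 * n - (i + j) = t →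
      (0 ≤ K i j ∧ K i j ≤ (m : ℤ)) ∧
      K i j ≤ lam i - ∑ l ∈ Finset.Icc (j + 1) n, K i l ∧
      (lam i - ∑ l ∈ Finset.Icc (j + 1) n, K i l) - K i j ≤ (m : ℤ) * ((j : ℤ) - (i : ℤ)) ∧
      (∀ l : ℕ, i ≤ l → l ≤ j →
        lam l - ∑ r ∈ Finset.Icc (j + 1) n, K l r
          ≤ lam i - ∑ r ∈ Finset.Icc (j + 1) n, K i r) ∧
      (i < j → K i j - K (i + 1) j
          ≤ (lam i - ∑ l ∈ Finset.Icc (j + 1) n, K i l)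
            - (lam (i + 1) - ∑ l ∈ Finset.Icc (j + 1) n, K (i + 1) l)) := by
  obtain ⟨hb, hmono⟩ := h
  intro t
  induction t using Nat.strong_induction_on with
  | _ t IH =>
  intro i j hi hij hjn ht
  have hin : i ≤ n := le_trans hij hjn
  have IHple : ∀ i' j' : ℕ, 1 ≤ i' → i' ≤ j' → j' ≤ n → i + j < i' + j' →
      (0 ≤ K i' j' ∧ K i' j' ≤ (m : ℤ)) ∧
      K i' j' ≤ lam i' - ∑ l ∈ Finset.Icc (j' + 1) n, K i' l ∧
      (lam i' - ∑ l ∈ Finset.Icc (j' + 1) n, K i' l) - K i' j' ≤ (m : ℤ) * ((j' : ℤ) - (i' : ℤ)) ∧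
      (∀ l : ℕ, i' ≤ l → l ≤ j' →
        lam l - ∑ r ∈ Finset.Icc (j' + 1) n, K l r
          ≤ lam i' - ∑ r ∈ Finset.Icc (j' + 1) n, K i' r) ∧
      (i' < j' → K i' j' - K (i' + 1) j'
          ≤ (lam i' - ∑ l ∈ Finset.Icc (j' + 1) n, K i' l)
            - (lam (i' + 1) - ∑ l ∈ Finset.Icc (j' + 1) n, K (i' + 1) l)) := by
    intro i' j' a b c d
    exact IH (2 * n - (i' + j')) (by omega) i' j' a b c rfl
  have hrec := hK i j hi hij hjn
  set S : ℤ := ∑ l ∈ Finset.Icc (j + 1) n, K i l with hSdef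
  set T : ℤ := ∑ l ∈ Finset.Icc (i + 1) j, K l j with hTdef
  have hDcast : (j : ℚ) - (i : ℚ) + 1 = (((j : ℤ) - (i : ℤ) + 1 : ℤ) : ℚ) := by
    push_cast; ring
  rw [hDcast] at hrec
  have hD : (0 : ℤ) < (j : ℤ) - (i : ℤ) + 1 := by omega
  -- H1 : 0 ≤ lam i - S
  have hH1 : 0 ≤ lam i - S := by
    by_cases hjn' : j = n
    · have he : Finset.Icc (j + 1) n = ∅ := Finset.Icc_eq_empty (by omega)
      rw [hSdef, he, Finset.sum_empty]
      simpa using (hb i hi hin).1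
    · have hj1 : j + 1 ≤ n := by omega
      obtain ⟨-, hc2, -, -, -⟩ := IHple i (j + 1) hi (by omega) hj1 (by omega)
      have hsplit := sum_Icc_left' hj1 (K i)
      rw [hSdef]; omega
  -- H2 : lam i - S ≤ m * (j - i + 1)
  have hH2 : lam i - S ≤ (m : ℤ) * ((j : ℤ) - (i : ℤ) + 1) := by
    by_cases hjn' : j = n
    · have he : Finset.Icc (j + 1) n = ∅ := Finset.Icc_eq_empty (by omega)
      rw [hSdef, he, Finset.sum_empty, sub_zero]
      have hjz : (j : ℤ) = (n : ℤ) := by exact_mod_cast hjn'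
      rw [hjz]
      exact (hb i hi hin).2
    · have hj1 : j + 1 ≤ n := by omega
      obtain ⟨-, -, hc3, -, -⟩ := IHple i (j + 1) hi (by omega) hj1 (by omega)
      have hsplit := sum_Icc_left' hj1 (K i)
      rw [hSdef]
      push_cast at hc3 ⊢
      have : ∑ l ∈ Finset.Icc (j + 1) n, K i l
          = K i (j + 1) + ∑ l ∈ Finset.Icc (j + 1 + 1) n, K i l := hsplit
      linarith [hc3, this]
  -- T ≥ 0
  have hT0 : 0 ≤ T := by
    rw [hTdef]
    apply Finset.sum_nonneg
    intro l hl
    rw [Finset.mem_Icc] at hl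
    exact (IHple l j (by omega) hl.2 hjn (by omega)).1.1
  -- C4
  have hC4 : ∀ l : ℕ, i ≤ l → l ≤ j →
      lam l - ∑ r ∈ Finset.Icc (j + 1) n, K l r
        ≤ lam i - ∑ r ∈ Finset.Icc (j + 1) n, K i r := by
    intro l hl1 hl2
    rcases eq_or_lt_of_le hl1 with rfl | hl
    · exact le_refl _
    · have hij' : i + 1 ≤ j := by omega
      have step : lam (i + 1) - ∑ r ∈ Finset.Icc (j + 1) n, K (i + 1) r
          ≤ lam i - ∑ r ∈ Finset.Icc (j + 1) n, K i r := by
        by_cases hjn' : j = n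
        · have he : Finset.Icc (j + 1) n = ∅ := Finset.Icc_eq_empty (by omega)
          rw [he]
          simpa using hmono i hi (by omega)
        · have hj1 : j + 1 ≤ n := by omega
          obtain ⟨-, -, -, -, hc5⟩ := IHple i (j + 1) hi (by omega) hj1 (by omega)
          have h5 := hc5 (by omega)
          have e1 := sum_Icc_left' hj1 (K i)
          have e2 := sum_Icc_left' hj1 (K (i + 1))
          omega
      have rest := (IHple (i + 1) j (by omega) hij' hjn (by omega)).2.2.2.1 l hl hl2
      exact le_trans rest step
  -- T ≤ (j - i) * (lam i - S)
  have hTle : T ≤ ((j : ℤ) - (i : ℤ)) * (lam i - S) := by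
    have hterm : ∀ l ∈ Finset.Icc (i + 1) j, K l j ≤ lam i - S := by
      intro l hl
      rw [Finset.mem_Icc] at hl
      have ha := (IHple l j (by omega) hl.2 hjn (by omega)).2.1
      have hb' := hC4 l (by omega) hl.2
      rw [hSdef]; omega
    have hsum := Finset.sum_le_sum hterm
    rw [Finset.sum_const, Nat.card_Icc, nsmul_eq_mul] at hsum
    rw [hTdef]
    refine le_trans hsum (le_of_eq ?_)
    congr 1
    omega
  -- C1
  have hC1 : 0 ≤ K i j ∧ K i j ≤ (m : ℤ) := by
    refine ⟨?_, by rw [hrec]; exact min_le_left _ _⟩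
    rw [hrec]
    refine le_min (by positivity) (le_ceil_intDiv hD (by nlinarith))
  -- C2
  have hC2 : K i j ≤ lam i - S := by
    rw [hrec]
    refine le_trans (min_le_right _ _) (ceil_intDiv_le hD ?_)
    nlinarith [hTle]
  -- C3
  have hC3 : (lam i - S) - K i j ≤ (m : ℤ) * ((j : ℤ) - (i : ℤ)) := by
    rw [hrec]
    rcases min_cases ((m : ℤ)) ⌈((lam i - S + T : ℤ) : ℚ) / (((j : ℤ) - (i : ℤ) + 1 : ℤ) : ℚ)⌉
      with ⟨hmin, -⟩ | ⟨hmin, -⟩ <;> rw [hmin]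
    · nlinarith [hH2]
    · set c : ℤ := ⌈((lam i - S + T : ℤ) : ℚ) / (((j : ℤ) - (i : ℤ) + 1 : ℤ) : ℚ)⌉ with hcdef
      have h1 : lam i - S + T ≤ c * ((j : ℤ) - (i : ℤ) + 1) := intDiv_le_ceil hD
      have h2 : (lam i - S) * ((j : ℤ) - (i : ℤ))
          ≤ ((m : ℤ) * ((j : ℤ) - (i : ℤ) + 1)) * ((j : ℤ) - (i : ℤ)) :=
        mul_le_mul_of_nonneg_right hH2 (by omega)
      have h3 : ((j : ℤ) - (i : ℤ) + 1) * ((lam i - S) - c)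
          ≤ ((j : ℤ) - (i : ℤ) + 1) * ((m : ℤ) * ((j : ℤ) - (i : ℤ))) := by nlinarith
      exact le_of_mul_le_mul_left h3 hD
  refine ⟨hC1, hC2, hC3, hC4, ?_⟩
  -- C5
  intro hij'
  have hrec' := hK (i + 1) j (by omega) hij' hjn
  have hDcast' : (j : ℚ) - ((i + 1 : ℕ) : ℚ) + 1 = (((j : ℤ) - (i : ℤ) : ℤ) : ℚ) := by
    push_cast; ring
  rw [hDcast'] at hrec'
  have hD' : (0 : ℤ) < (j : ℤ) - (i : ℤ) := by omega
  set T' : ℤ := ∑ l ∈ Finset.Icc (i + 1 + 1) j, K l j with hT'def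
  set S' : ℤ := ∑ l ∈ Finset.Icc (j + 1) n, K (i + 1) l with hS'def
  have hsplitT : T = K (i + 1) j + T' := by
    rw [hTdef, hT'def]
    exact sum_Icc_left' hij' (fun l => K l j)
  have hΔ : 0 ≤ (lam i - S) - (lam (i + 1) - S') := by
    have := hC4 (i + 1) (by omega) hij'
    rw [hSdef, hS'def]; omega
  rcases min_cases ((m : ℤ))
      ⌈((lam (i + 1) - S' + T' : ℤ) : ℚ) / (((j : ℤ) - (i : ℤ) : ℤ) : ℚ)⌉ with
      ⟨hmin, -⟩ | ⟨hmin, -⟩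
  · have hK2 : K (i + 1) j = (m : ℤ) := by rw [hrec', hmin]
    have hK1 : K i j ≤ (m : ℤ) := hC1.2
    omega
  · have hK2 : K (i + 1) j
        = ⌈((lam (i + 1) - S' + T' : ℤ) : ℚ) / (((j : ℤ) - (i : ℤ) : ℤ) : ℚ)⌉ := by
      rw [hrec', hmin]
    have hq' : lam (i + 1) - S' + T' ≤ K (i + 1) j * ((j : ℤ) - (i : ℤ)) := by
      rw [hK2]; exact intDiv_le_ceil hD'
    have hKle : K i j ≤ ⌈((lam i - S + T : ℤ) : ℚ) / (((j : ℤ) - (i : ℤ) + 1 : ℤ) : ℚ)⌉ := by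
      rw [hrec]; exact min_le_right _ _
    have hceil : ⌈((lam i - S + T : ℤ) : ℚ) / (((j : ℤ) - (i : ℤ) + 1 : ℤ) : ℚ)⌉
        ≤ K (i + 1) j + ((lam i - S) - (lam (i + 1) - S')) := by
      apply ceil_intDiv_le hD
      have hprod : 0 ≤ ((lam i - S) - (lam (i + 1) - S')) * ((j : ℤ) - (i : ℤ)) :=
        mul_nonneg hΔ (by omega)
      linarith [hq', hsplitT, hprod]
    omega

lemma tableau_rowsum (n m : ℕ) (hm : 1 ≤ m) (lam : ℕ → ℤ)
    (h : IsTypeAPartition n m lam) (K : ℕ → ℕ → ℤ) (hK : TableauRec n m lam K) :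
    ∀ i : ℕ, 1 ≤ i → i ≤ n → lam i = ∑ l ∈ Finset.Icc i n, K i l := by
  intro i hi hin
  have hrec := hK i i hi le_rfl hin
  have hTempty : Finset.Icc (i + 1) i = ∅ := Finset.Icc_eq_empty (by omega)
  rw [hTempty, Finset.sum_empty] at hrec
  have hden : (i : ℚ) - (i : ℚ) + 1 = 1 := by ring
  rw [hden, div_one, add_zero, Int.ceil_intCast] at hrec
  set S : ℤ := ∑ l ∈ Finset.Icc (i + 1) n, K i l with hSdef
  have hH2 : lam i - S ≤ (m : ℤ) := by
    by_cases hin' : i = n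
    · have he : Finset.Icc (i + 1) n = ∅ := Finset.Icc_eq_empty (by omega)
      rw [hSdef, he, Finset.sum_empty, sub_zero]
      have hiz : (i : ℤ) = (n : ℤ) := by exact_mod_cast hin'
      have := (h.1 i hi hin).2
      rw [hiz] at this
      simpa using this
    · have hi1 : i + 1 ≤ n := by omega
      obtain ⟨-, -, hc3, -, -⟩ :=
        tableau_key n m hm lam h K hK (2 * n - (i + (i + 1))) i (i + 1) hi (by omega) hi1 rfl
      have hsplit := sum_Icc_left' hi1 (K i)
      rw [hSdef]
      have hcast : ((i + 1 : ℕ) : ℤ) - (i : ℤ) = 1 := by push_cast; ring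
      rw [hcast, mul_one] at hc3
      omega
  have hKii : K i i = lam i - S := by
    rw [hrec]; exact min_eq_right hH2
  have hsplit := sum_Icc_left' hin (K i)
  rw [hsplit, hKii]
  omega

/-- The map sending a type-A partition `lam ∈ P^m_n` to its recursively defined tableau
`(k_{i,j}(lam))_{1 ≤ i ≤ j ≤ n}` is injective: if two partitions have the same tableau
entries on the triangular domain, they are equal. -/
theorem tableau_map_injective (n m : ℕ) (hn : 1 ≤ n) (hm : 1 ≤ m)
    (lam1 lam2 : ℕ → ℤ)
    (h1 : IsTypeAPartition n m lam1) (h2 : IsTypeAPartition n m lam2)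
    (K1 K2 : ℕ → ℕ → ℤ)
    (hK1 : TableauRec n m lam1 K1) (hK2 : TableauRec n m lam2 K2)
    (heq : ∀ i j : ℕ, 1 ≤ i → i ≤ j → j ≤ n → K1 i j = K2 i j) :
    ∀ i : ℕ, 1 ≤ i → i ≤ n → lam1 i = lam2 i := by
  intro i hi hin
  rw [tableau_rowsum n m hm lam1 h1 K1 hK1 i hi hin,
      tableau_rowsum n m hm lam2 h2 K2 hK2 i hi hin]
  apply Finset.sum_congr rfl
  intro l hl
  rw [Finset.mem_Icc] at hl
  exact heq i l hi hl.1 hl.2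
end

section
/- Let n ≥ 2 and m ≥ 1 be integers, let λ ∈ P^m_n and write k_{i,j} = k_{i,j}(λ). Then: (i) the tuple λ^{(1)} = (λ_2, λ_3, …, λ_n) belongs to P^m_{n−1} and k_{i,j}(λ^{(1)}) = k_{i+1,j+1} for all 1 ≤ i ≤ j ≤ n−1; (ii) the tuple λ^{(2)} with parts λ^{(2)}_i = λ_i − k_{i,n} for 1 ≤ i ≤ n−1 belongs to P^m_{n−1} and k_{i,j}(λ^{(2)}) = k_{i,j} for all 1 ≤ i ≤ j ≤ n−1. -/
lemma sum_shift_one (a b : ℕ) (f : ℕ → ℤ) :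
    ∑ l ∈ Finset.Icc (a + 1) (b + 1), f l = ∑ l ∈ Finset.Icc a b, f (l + 1) := by
  rw [← Finset.map_add_right_Icc a b 1, Finset.sum_map]
  rfl

lemma tableau_unique (N m : ℕ) (mu : ℕ → ℤ) (K1 K2 : ℕ → ℕ → ℤ)
    (h1 : TableauRec N m mu K1) (h2 : TableauRec N m mu K2) :
    ∀ i j : ℕ, 1 ≤ i → i ≤ j → j ≤ N → K1 i j = K2 i j := by
  have key : ∀ d i j : ℕ, 1 ≤ i → i ≤ j → j ≤ N → 2 * (N - j) + (j - i) = d →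
      K1 i j = K2 i j := by
    intro d
    induction d using Nat.strong_induction_on with
    | _ d ih =>
      intro i j hi hij hjN hd
      have e1 : ∑ l ∈ Finset.Icc (j + 1) N, K1 i l = ∑ l ∈ Finset.Icc (j + 1) N, K2 i l := by
        refine Finset.sum_congr rfl fun l hl => ?_
        rw [Finset.mem_Icc] at hl
        exact ih (2 * (N - l) + (l - i)) (by omega) i l hi (by omega) (by omega) rfl
      have e2 : ∑ l ∈ Finset.Icc (i + 1) j, K1 l j = ∑ l ∈ Finset.Icc (i + 1) j, K2 l j := by
        refine Finset.sum_congr rfl fun l hl => ?_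
        rw [Finset.mem_Icc] at hl
        exact ih (2 * (N - j) + (j - l)) (by omega) l j (by omega) (by omega) hjN rfl
      rw [h1 i j hi hij hjN, h2 i j hi hij hjN, e1, e2]
  intro i j hi hij hjN
  exact key _ i j hi hij hjN rfl

/-- Parts (i) and (ii) of the subtableau lemma: for `lam ∈ P^m_n` with tableau entries
`k_{i,j} = k_{i,j}(lam)`,
(i) `lam⁽¹⁾ = (lam_2, …, lam_n) ∈ P^m_{n−1}` and `k_{i,j}(lam⁽¹⁾) = k_{i+1,j+1}`;
(ii) `lam⁽²⁾` with parts `lam⁽²⁾_i = lam_i − k_{i,n}` (for `1 ≤ i ≤ n−1`) lies in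
`P^m_{n−1}` and `k_{i,j}(lam⁽²⁾) = k_{i,j}` for all `1 ≤ i ≤ j ≤ n−1`. -/
theorem subtableau_lemma_parts_one_two (n m : ℕ) (hn : 2 ≤ n) (hm : 1 ≤ m)
    (lam : ℕ → ℤ) (hlam : IsTypeAPartition n m lam)
    (K : ℕ → ℕ → ℤ) (hK : TableauRec n m lam K) :
    (IsTypeAPartition (n - 1) m (fun i => lam (i + 1)) ∧
      ∀ K1 : ℕ → ℕ → ℤ, TableauRec (n - 1) m (fun i => lam (i + 1)) K1 →
        ∀ i j : ℕ, 1 ≤ i → i ≤ j → j ≤ n - 1 → K1 i j = K (i + 1) (j + 1)) ∧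
    (IsTypeAPartition (n - 1) m (fun i => lam i - K i n) ∧
      ∀ K2 : ℕ → ℕ → ℤ, TableauRec (n - 1) m (fun i => lam i - K i n) K2 →
        ∀ i j : ℕ, 1 ≤ i → i ≤ j → j ≤ n - 1 → K2 i j = K i j) := by
  obtain ⟨hbd, hmono⟩ := hlam
  have hn1 : n - 1 + 1 = n := by omega
  have hn1c : ((n - 1 : ℕ) : ℤ) = (n : ℤ) - 1 := by omega
  -- lam is antitone on [1, n]
  have lam_anti : ∀ i l : ℕ, 1 ≤ i → i ≤ l → l ≤ n → lam l ≤ lam i := by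
    intro i l hi hil
    induction l, hil using Nat.le_induction with
    | base => intro _; exact le_refl _
    | succ l hl ih =>
      intro hln
      exact le_trans (hmono l (by omega) (by omega)) (ih (by omega))
  -- the recursion for the last column
  have colrec : ∀ i : ℕ, 1 ≤ i → i ≤ n →
      K i n = min (m : ℤ)
        ⌈(((lam i + ∑ l ∈ Finset.Icc (i + 1) n, K l n : ℤ) : ℚ) / ((n : ℚ) - i + 1)) ⌉ := by
    intro i hi hin
    have h := hK i n hi hin le_rfl
    rw [Finset.Icc_eq_empty (by omega), Finset.sum_empty] at h
    rw [h]
    norm_num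
  -- basic bounds on the last column
  have col : ∀ i : ℕ, 1 ≤ i → i ≤ n → 0 ≤ K i n ∧ K i n ≤ lam i := by
    have key : ∀ t i : ℕ, 1 ≤ i → i ≤ n → n - i = t → 0 ≤ K i n ∧ K i n ≤ lam i := by
      intro t
      induction t using Nat.strong_induction_on with
      | _ t ih =>
        intro i hi hin ht
        have hS0 : 0 ≤ ∑ l ∈ Finset.Icc (i + 1) n, K l n := by
          refine Finset.sum_nonneg fun l hl => ?_
          rw [Finset.mem_Icc] at hl
          exact (ih (n - l) (by omega) l (by omega) (by omega) rfl).1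
        have hSle : ∑ l ∈ Finset.Icc (i + 1) n, K l n ≤ ((n - i : ℕ) : ℤ) * lam i := by
          calc ∑ l ∈ Finset.Icc (i + 1) n, K l n
              ≤ (Finset.Icc (i + 1) n).card • lam i := by
                refine Finset.sum_le_card_nsmul _ _ _ fun l hl => ?_
                rw [Finset.mem_Icc] at hl
                exact le_trans (ih (n - l) (by omega) l (by omega) (by omega) rfl).2
                  (lam_anti i l hi (by omega) (by omega))
            _ = ((n - i : ℕ) : ℤ) * lam i := by
                rw [Nat.card_Icc, show n + 1 - (i + 1) = n - i from by omega, nsmul_eq_mul]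
        have hden : (0 : ℚ) < (n : ℚ) - i + 1 := by
          have : (i : ℚ) ≤ n := by exact_mod_cast hin
          linarith
        have hlam0 := (hbd i hi hin).1
        constructor
        · rw [colrec i hi hin]
          refine le_min (by exact_mod_cast Nat.zero_le m) (Int.ceil_nonneg ?_)
          apply div_nonneg _ (le_of_lt hden)
          have : (0 : ℤ) ≤ lam i + ∑ l ∈ Finset.Icc (i + 1) n, K l n := by linarith
          exact_mod_cast this
        · rw [colrec i hi hin]
          refine le_trans (min_le_right _ _) (Int.ceil_le.mpr ?_)
          rw [div_le_iff₀ hden]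
          have hni : ((n - i : ℕ) : ℤ) = (n : ℤ) - i := by omega
          rw [hni] at hSle
          have : (lam i + ∑ l ∈ Finset.Icc (i + 1) n, K l n : ℤ)
              ≤ lam i * ((n : ℤ) - i + 1) := by nlinarith
          exact_mod_cast this
    intro i hi hin
    exact key (n - i) i hi hin rfl
  -- when the min is attained at the ceiling, a linear inequality holds
  have ceil_ineq : ∀ i : ℕ, 1 ≤ i → i ≤ n →
      K i n = (m : ℤ) ∨
      (lam i + ∑ l ∈ Finset.Icc (i + 1) n, K l n : ℤ) ≤ K i n * ((n : ℤ) - i + 1) := by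
    intro i hi hin
    have h := colrec i hi hin
    rcases min_cases ((m : ℤ))
      ⌈(((lam i + ∑ l ∈ Finset.Icc (i + 1) n, K l n : ℤ) : ℚ) / ((n : ℚ) - i + 1))⌉ with
      ⟨h1, _⟩ | ⟨h1, _⟩
    · left; rw [h, h1]
    · right
      rw [h, h1]
      have hden : (0 : ℚ) < (n : ℚ) - i + 1 := by
        have : (i : ℚ) ≤ n := by exact_mod_cast hin
        linarith
      have hle := Int.le_ceil
        (((lam i + ∑ l ∈ Finset.Icc (i + 1) n, K l n : ℤ) : ℚ) / ((n : ℚ) - i + 1))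
      rw [div_le_iff₀ hden] at hle
      exact_mod_cast hle
  -- sum split at bottom
  have ssplit : ∀ i : ℕ, i + 1 ≤ n →
      ∑ l ∈ Finset.Icc (i + 1) n, K l n
        = K (i + 1) n + ∑ l ∈ Finset.Icc (i + 2) n, K l n := by
    intro i hin
    have : Finset.Icc (i + 1) n = insert (i + 1) (Finset.Icc (i + 2) n) := by
      ext x
      simp only [Finset.mem_Icc, Finset.mem_insert]
      omega
    rw [this, Finset.sum_insert (by simp [Finset.mem_Icc])]
  -- Part (i) partition
  have part1a : IsTypeAPartition (n - 1) m (fun i => lam (i + 1)) := by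
    constructor
    · intro i hi hin
      obtain ⟨h0, h1⟩ := hbd (i + 1) (by omega) (by omega)
      refine ⟨h0, ?_⟩
      rw [hn1c]
      push_cast at h1 ⊢
      linarith
    · intro i hi hin
      exact hmono (i + 1) (by omega) (by omega)
  -- Part (i) tableau: the shifted K satisfies the recursion for the shifted lam
  have hK1 : TableauRec (n - 1) m (fun i => lam (i + 1)) (fun i j => K (i + 1) (j + 1)) := by
    intro i j hi hij hjn
    have h := hK (i + 1) (j + 1) (by omega) (by omega) (by omega)
    simp only []
    rw [h]
    have e1 : ∑ l ∈ Finset.Icc (j + 1 + 1) n, K (i + 1) l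
        = ∑ l ∈ Finset.Icc (j + 1) (n - 1), K (i + 1) (l + 1) := by
      rw [← hn1, sum_shift_one]
      norm_num
    have e2 : ∑ l ∈ Finset.Icc (i + 1 + 1) (j + 1), K l (j + 1)
        = ∑ l ∈ Finset.Icc (i + 1) j, K (l + 1) (j + 1) := sum_shift_one _ _ _
    rw [e1, e2]
    congr 2
    push_cast
    ring
  -- Part (ii) partition
  have col_ub : ∀ i : ℕ, 1 ≤ i → i ≤ n - 1 →
      lam i - K i n ≤ (m : ℤ) * ((n : ℤ) - i) := by
    intro i hi hin
    have hb := (hbd i hi (by omega)).2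
    rcases ceil_ineq i hi (by omega) with h | h
    · rw [h]; linarith
    · have hS0 : 0 ≤ ∑ l ∈ Finset.Icc (i + 1) n, K l n := by
        refine Finset.sum_nonneg fun l hl => ?_
        rw [Finset.mem_Icc] at hl
        exact (col l (by omega) (by omega)).1
      have hKm : K i n ≤ (m : ℤ) := by
        rw [colrec i hi (by omega)]; exact min_le_left _ _
      have hd : (1 : ℤ) ≤ (n : ℤ) - i := by omega
      nlinarith [(col i hi (by omega)).1]
  have mono2 : ∀ i : ℕ, 1 ≤ i → i < n - 1 →
      lam (i + 1) - K (i + 1) n ≤ lam i - K i n := by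
    intro i hi hin
    have hml := hmono i hi (by omega)
    rcases ceil_ineq (i + 1) (by omega) (by omega) with h | h
    · -- K (i+1) n = m; use K i n ≤ m
      have hKm : K i n ≤ (m : ℤ) := by
        rw [colrec i hi (by omega)]; exact min_le_left _ _
      rw [h]; linarith
    · -- ceiling case
      have hsplit := ssplit i (by omega)
      set S2 := ∑ l ∈ Finset.Icc (i + 2) n, K l n with hS2
      have hc2 : (lam (i + 1) + S2 : ℤ) ≤ K (i + 1) n * ((n : ℤ) - i) := by
        have : ((n : ℤ) - (i + 1 : ℕ) + 1) = (n : ℤ) - i := by push_cast; ring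
        rw [this] at h
        linarith [h]
      have hc2' : 0 ≤ K (i + 1) n := (col (i + 1) (by omega) (by omega)).1
      have goal' : K i n ≤ lam i - lam (i + 1) + K (i + 1) n := by
        rw [colrec i hi (by omega)]
        refine le_trans (min_le_right _ _) (Int.ceil_le.mpr ?_)
        have hden : (0 : ℚ) < (n : ℚ) - i + 1 := by
          have : (i : ℚ) ≤ n := by exact_mod_cast (by omega : i ≤ n)
          linarith
        rw [div_le_iff₀ hden]
        have hi2 : (2 : ℤ) ≤ (n : ℤ) - i := by omega
        have key : (lam i + ∑ l ∈ Finset.Icc (i + 1) n, K l n : ℤ)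
            ≤ (lam i - lam (i + 1) + K (i + 1) n) * ((n : ℤ) - i + 1) := by
          rw [hsplit]
          nlinarith [mul_nonneg (sub_nonneg.mpr hml) (by omega : (0:ℤ) ≤ (n : ℤ) - i)]
        calc ((lam i + ∑ l ∈ Finset.Icc (i + 1) n, K l n : ℤ) : ℚ)
            ≤ ((lam i - lam (i + 1) + K (i + 1) n : ℤ) : ℚ) * (((n : ℤ) - i + 1 : ℤ) : ℚ) := by
              exact_mod_cast key
          _ = ((lam i - lam (i + 1) + K (i + 1) n : ℤ) : ℚ) * ((n : ℚ) - i + 1) := by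
              push_cast; ring
      linarith
  have part2a : IsTypeAPartition (n - 1) m (fun i => lam i - K i n) := by
    constructor
    · intro i hi hin
      refine ⟨?_, ?_⟩
      · have := (col i hi (by omega)).2
        simp only []
        linarith
      · have := col_ub i hi hin
        simp only []
        rw [hn1c]
        have : (m : ℤ) * ((n : ℤ) - 1 - i + 1) = (m : ℤ) * ((n : ℤ) - i) := by ring
        rw [this]
        exact col_ub i hi hin
    · intro i hi hin
      exact mono2 i hi (by omega)
  -- Part (ii) tableau: K itself satisfies the recursion for lam - K·n on the smaller triangle
  have hK2 : TableauRec (n - 1) m (fun i => lam i - K i n) K := by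
    intro i j hi hij hjn
    have h := hK i j hi hij (by omega)
    simp only []
    rw [h]
    have esplit : ∑ l ∈ Finset.Icc (j + 1) n, K i l
        = (∑ l ∈ Finset.Icc (j + 1) (n - 1), K i l) + K i n := by
      rw [← hn1, Finset.sum_Icc_succ_top (by omega)]
      norm_num
    rw [esplit]
    congr 3
    push_cast
    ring
  refine ⟨⟨part1a, ?_⟩, ⟨part2a, ?_⟩⟩
  · intro K1 hK1' i j hi hij hjn
    exact tableau_unique (n - 1) m _ K1 _ hK1' hK1 i j hi hij hjn
  · intro K2 hK2' i j hi hij hjn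
    exact tableau_unique (n - 1) m _ K2 K hK2' hK2 i j hi hij hjn
end

section
/- Let n ≥ 2 and m ≥ 1 be integers, let λ ∈ P^m_n and write k_{i,j} = k_{i,j}(λ). Then: (iii) the tuple λ^{(3)} with parts λ^{(3)}_i = λ_i − k_{i,n} − k_{i,n−1} for 1 ≤ i ≤ n−2 belongs to P^m_{n−2} and k_{i,j}(λ^{(3)}) = k_{i,j} for all 1 ≤ i ≤ j ≤ n−2; (iv) the tuple λ^{(4)} with parts λ^{(4)}_i = λ_i − k_{i,n−1} for 1 ≤ i ≤ n−1 belongs to P^m_{n−1}, with k_{i,j}(λ^{(4)}) = k_{i,j} for all 1 ≤ i ≤ j ≤ n−2 and k_{i,n−1}(λ^{(4)}) = k_{i,n} for all 1 ≤ i ≤ n−1. -/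
namespace Subtab

lemma ceil_le_iff' {x k z : ℤ} (hk : 0 < k) : ⌈(x:ℚ)/(k:ℚ)⌉ ≤ z ↔ x ≤ k * z := by
  rw [Int.ceil_le, div_le_iff₀ (by exact_mod_cast hk)]
  constructor
  · intro h; have : (x:ℚ) ≤ ((k*z : ℤ) : ℚ) := by push_cast; linarith
    exact_mod_cast this
  · intro h; have : (x:ℚ) ≤ ((k*z : ℤ) : ℚ) := by exact_mod_cast h
    push_cast at this; linarith

lemma le_ceil_iff' {x k z : ℤ} (hk : 0 < k) : z ≤ ⌈(x:ℚ)/(k:ℚ)⌉ ↔ k * (z - 1) < x := by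
  constructor
  · intro h
    by_contra hc
    push_neg at hc
    have : ⌈(x:ℚ)/(k:ℚ)⌉ ≤ z - 1 := (ceil_le_iff' hk).2 (by linarith)
    omega
  · intro h
    have h2 : ((k*(z-1) : ℤ):ℚ) < (x:ℚ) := by exact_mod_cast h
    have : ((z:ℚ) - 1) < (x:ℚ)/(k:ℚ) := by
      rw [lt_div_iff₀ (by exact_mod_cast hk)]; push_cast at h2 ⊢; linarith
    have := Int.lt_ceil.2 (show ((z-1 : ℤ):ℚ) < (x:ℚ)/(k:ℚ) by push_cast; linarith)
    omega

/-- the single-column recursion -/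
def IsLC (N m : ℕ) (f a : ℕ → ℤ) : Prop :=
  ∀ i : ℕ, 1 ≤ i → i ≤ N →
    a i = min (m : ℤ) ⌈(((f i + ∑ l ∈ Finset.Icc (i + 1) N, a l : ℤ) : ℚ)
        / ((N : ℚ) - (i : ℚ) + 1))⌉

section LC

variable {N m : ℕ} {f a : ℕ → ℤ}

lemma denom_cast {i : ℕ} (h : i ≤ N) :
    ((N : ℚ) - (i : ℚ) + 1) = (((N : ℤ) - i + 1 : ℤ) : ℚ) := by push_cast; ring

lemma denom_pos {i : ℕ} (h : i ≤ N) : (0:ℤ) < (N : ℤ) - i + 1 := by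
  have : (i:ℤ) ≤ N := by exact_mod_cast h
  linarith

lemma lc_le_m (ha : IsLC N m f a) {i : ℕ} (h1 : 1 ≤ i) (h2 : i ≤ N) : a i ≤ m := by
  rw [ha i h1 h2]; exact min_le_left _ _

lemma lc_lower (ha : IsLC N m f a) {i : ℕ} (h1 : 1 ≤ i) (h2 : i ≤ N) :
    ((N:ℤ) - i + 1) * (a i - 1) < f i + ∑ l ∈ Finset.Icc (i + 1) N, a l := by
  have := ha i h1 h2
  rw [denom_cast h2] at this
  have h3 : a i ≤ ⌈(((f i + ∑ l ∈ Finset.Icc (i + 1) N, a l : ℤ) : ℚ)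
      / (((N : ℤ) - i + 1 : ℤ) : ℚ))⌉ := this ▸ min_le_right _ _
  exact (le_ceil_iff' (denom_pos h2)).1 h3

lemma lc_upper (ha : IsLC N m f a) {i : ℕ} (h1 : 1 ≤ i) (h2 : i ≤ N) (hm : a i < m) :
    f i + ∑ l ∈ Finset.Icc (i + 1) N, a l ≤ ((N:ℤ) - i + 1) * a i := by
  have heq := ha i h1 h2
  rw [denom_cast h2] at heq
  set c := ⌈(((f i + ∑ l ∈ Finset.Icc (i + 1) N, a l : ℤ) : ℚ)
      / (((N : ℤ) - i + 1 : ℤ) : ℚ))⌉ with hc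
  have hac : a i = c := by
    rcases le_total (m:ℤ) c with h | h
    · omega
    · simp [heq, min_eq_right h]
  exact (ceil_le_iff' (denom_pos h2)).1 (le_of_eq hac.symm)

end LC
end Subtab

namespace Subtab
section LC2
variable {N m : ℕ} {f a : ℕ → ℤ}

/-- if the value `z` is at most `m` and below the ceiling, it's at most `a i` -/
lemma lc_ge (ha : IsLC N m f a) {i : ℕ} (h1 : 1 ≤ i) (h2 : i ≤ N) {z : ℤ}
    (hzm : z ≤ m) (hz : ((N:ℤ) - i + 1) * (z - 1) < f i + ∑ l ∈ Finset.Icc (i + 1) N, a l) :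
    z ≤ a i := by
  rw [ha i h1 h2, denom_cast h2]
  exact le_min hzm ((le_ceil_iff' (denom_pos h2)).2 hz)

lemma lc_le_val (ha : IsLC N m f a) {i : ℕ} (h1 : 1 ≤ i) (h2 : i ≤ N) {z : ℤ}
    (hz : f i + ∑ l ∈ Finset.Icc (i + 1) N, a l ≤ ((N:ℤ) - i + 1) * z) :
    a i ≤ z := by
  rw [ha i h1 h2, denom_cast h2]
  exact le_trans (min_le_right _ _) ((ceil_le_iff' (denom_pos h2)).2 hz)

/-- downward strong induction on `[1, N]` -/
lemma downward_ind {N : ℕ} {P : ℕ → Prop}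
    (step : ∀ i, 1 ≤ i → i ≤ N → (∀ l, i < l → l ≤ N → P l) → P i) :
    ∀ i, 1 ≤ i → i ≤ N → P i := by
  have H : ∀ t, ∀ i, 1 ≤ i → i ≤ N → N - i ≤ t → P i := by
    intro t
    induction t with
    | zero => exact fun i h1 h2 h3 => step i h1 h2 (fun l hl hlN => by omega)
    | succ t IH => exact fun i h1 h2 h3 => step i h1 h2 (fun l hl hlN => IH l (by omega) hlN (by omega))
  exact fun i h1 h2 => H (N - i) i h1 h2 le_rfl

lemma sum_Icc_bot {i N : ℕ} (h : i ≤ N) (g : ℕ → ℤ) :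
    ∑ l ∈ Finset.Icc i N, g l = g i + ∑ l ∈ Finset.Icc (i+1) N, g l := by
  rw [Finset.Icc_eq_cons_Ioc h, Finset.sum_cons, Finset.Icc_add_one_left_eq_Ioc]

section withPart
variable (hm : 1 ≤ m) (hf : IsTypeAPartition N m f) (ha : IsLC N m f a)
include hm hf ha

lemma f_anti : ∀ i l, 1 ≤ i → i ≤ l → l ≤ N → f l ≤ f i := by
  intro i l h1 hil hlN
  induction l, hil using Nat.le_induction with
  | base => exact le_rfl
  | succ l hl IH =>
    exact le_trans (hf.2 l (by omega) (by omega)) (IH (by omega))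

lemma lc_nonneg : ∀ i, 1 ≤ i → i ≤ N → 0 ≤ a i := by
  apply downward_ind
  intro i h1 h2 IH
  have hsum : 0 ≤ ∑ l ∈ Finset.Icc (i+1) N, a l :=
    Finset.sum_nonneg (fun l hl => by
      simp only [Finset.mem_Icc] at hl; exact IH l (by omega) hl.2)
  apply lc_ge ha h1 h2 (by exact_mod_cast Nat.zero_le m)
  have hf0 := (hf.1 i h1 h2).1
  have := denom_pos (N := N) (i := i) h2
  nlinarith

lemma lc_anti : ∀ i l, 1 ≤ i → i ≤ l → l ≤ N → a l ≤ a i := by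
  intro i l h1 hil hlN
  induction l, hil using Nat.le_induction with
  | base => exact le_rfl
  | succ l hl IH =>
    refine le_trans ?_ (IH (by omega))
    -- adjacent: a (l+1) ≤ a l, with 1 ≤ l, l+1 ≤ N
    have h1l : 1 ≤ l := by omega
    have hlN' : l ≤ N := by omega
    have hlow := lc_lower ha (i := l+1) (by omega) hlN
    -- a l ≥ a (l+1): use lc_ge at l
    apply lc_ge ha h1l hlN' (lc_le_m ha (by omega) hlN)
    rw [sum_Icc_bot (show l + 1 ≤ N from hlN) a]
    have hff : f (l+1) ≤ f l := hf.2 l h1l (by omega)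
    push_cast at hlow ⊢
    nlinarith [denom_pos (N := N) (i := l+1) hlN]

lemma lc_le_f : ∀ i, 1 ≤ i → i ≤ N → a i ≤ f i := by
  apply downward_ind
  intro i h1 h2 IH
  apply lc_le_val ha h1 h2
  have hcard : (Finset.Icc (i+1) N).card = N - i := by
    rw [Nat.card_Icc]; omega
  have hsum : ∑ l ∈ Finset.Icc (i+1) N, a l ≤ ((N:ℤ) - i) * f i := by
    calc ∑ l ∈ Finset.Icc (i+1) N, a l ≤ ∑ l ∈ Finset.Icc (i+1) N, f i := by
          apply Finset.sum_le_sum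
          intro l hl
          simp only [Finset.mem_Icc] at hl
          exact le_trans (IH l (by omega) hl.2) (f_anti hm hf ha i l h1 (by omega) hl.2)
      _ = ((N:ℤ) - i) * f i := by
          rw [Finset.sum_const, hcard, nsmul_eq_mul]
          have hc2 : ((N - i : ℕ):ℤ) = (N:ℤ) - i := by omega
          rw [hc2]
  linarith

lemma lc_sub_nonneg : ∀ i, 1 ≤ i → i ≤ N → 0 ≤ f i - a i := by
  intro i h1 h2; have := lc_le_f hm hf ha i h1 h2; omega

lemma lc_sub_le : ∀ i, 1 ≤ i → i ≤ N → f i - a i ≤ (m:ℤ) * ((N:ℤ) - i) := by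
  intro i h1 h2
  rcases lt_or_ge (a i) (m:ℤ) with hlt | hge
  · have hu := lc_upper ha h1 h2 hlt
    have hsum : 0 ≤ ∑ l ∈ Finset.Icc (i+1) N, a l :=
      Finset.sum_nonneg (fun l hl => by
        simp only [Finset.mem_Icc] at hl; exact lc_nonneg hm hf ha l (by omega) hl.2)
    have ham : a i ≤ m := lc_le_m ha h1 h2
    have hNi : (0:ℤ) ≤ (N:ℤ) - i := by
      have : (i:ℤ) ≤ N := by exact_mod_cast h2
      linarith
    nlinarith
  · have ham : a i ≤ m := lc_le_m ha h1 h2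
    have haeq : a i = m := le_antisymm ham hge
    have := (hf.1 i h1 h2).2
    rw [haeq]; linarith

lemma lc_sub_anti : ∀ i, 1 ≤ i → i + 1 ≤ N → f (i+1) - a (i+1) ≤ f i - a i := by
  intro i h1 h2
  rcases lt_or_ge (a (i+1)) (m:ℤ) with hlt | hge
  · have hu := lc_upper ha (i := i+1) (by omega) h2 hlt
    have hff : f (i+1) ≤ f i := hf.2 i h1 (by omega)
    -- a i ≤ a (i+1) + (f i - f (i+1))
    have : a i ≤ a (i+1) + (f i - f (i+1)) := by
      apply lc_le_val ha h1 (by omega)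
      rw [sum_Icc_bot (show i + 1 ≤ N from h2) a]
      have := denom_pos (N := N) (i := i+1) h2
      push_cast at hu ⊢
      nlinarith
    linarith
  · have e1 : a (i+1) = m := le_antisymm (lc_le_m ha (by omega) h2) hge
    have e2 : a i ≤ m := lc_le_m ha h1 (by omega)
    have hff : f (i+1) ≤ f i := hf.2 i h1 (by omega)
    linarith

lemma lc_sub_isPart (hN : 1 ≤ N) : IsTypeAPartition (N-1) m (fun i => f i - a i) := by
  constructor
  · intro i h1 h2
    dsimp only
    have h2' : i ≤ N := by omega
    refine ⟨lc_sub_nonneg hm hf ha i h1 h2', ?_⟩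
    have hle := lc_sub_le hm hf ha i h1 h2'
    have hcast : ((N - 1 : ℕ) : ℤ) = (N:ℤ) - 1 := by omega
    rw [hcast]
    have heq : (m:ℤ) * ((N:ℤ) - i) = (m:ℤ) * ((N:ℤ) - 1 - i + 1) := by ring
    linarith
  · intro i h1 h2
    dsimp only
    exact lc_sub_anti hm hf ha i h1 (by omega)

end withPart
end LC2
end Subtab

namespace Subtab
section TwoCol
set_option linter.unusedSectionVars false

variable {M m : ℕ} {f a b : ℕ → ℤ}
variable (hm : 1 ≤ m) (hf : IsTypeAPartition (M+1) m f)
  (ha : IsLC (M+1) m f a) (hb : IsLC M m (fun i => f i - a i) b)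
include hm hf ha hb

lemma mu_isPart : IsTypeAPartition M m (fun i => f i - a i) := by
  have h := lc_sub_isPart hm hf ha (by omega)
  simpa using h

lemma a_top_nonneg : 0 ≤ a (M+1) := lc_nonneg hm hf ha (M+1) (by omega) le_rfl

lemma sum_split {i : ℕ} (h : i ≤ M) :
    ∑ l ∈ Finset.Icc (i+1) (M+1), a l = (∑ l ∈ Finset.Icc (i+1) M, a l) + a (M+1) :=
  Finset.sum_Icc_succ_top (by omega) a

lemma card_Icc' {i : ℕ} (h : i ≤ M) : ((Finset.Icc (i+1) M).card : ℤ) = (M:ℤ) - i := by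
  rw [Nat.card_Icc]; omega

lemma M1 : ∀ i, 1 ≤ i → i ≤ M → 0 ≤ a i - b i := by
  apply downward_ind
  intro i h1 h2 IH
  rcases lt_or_ge (a i) (m:ℤ) with hai | hge
  · have hu := lc_upper ha h1 (by omega) hai
    rw [sum_split hm hf ha hb h2] at hu
    have hS : ∑ l ∈ Finset.Icc (i+1) M, b l ≤ ∑ l ∈ Finset.Icc (i+1) M, a l := by
      apply Finset.sum_le_sum
      intro l hl
      simp only [Finset.mem_Icc] at hl
      have := IH l (by omega) hl.2
      linarith
    have hg := a_top_nonneg hm hf ha hb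
    have hcast : ((M+1:ℕ):ℤ) = (M:ℤ)+1 := by push_cast; ring
    rw [hcast] at hu
    have hval : f i - a i + ∑ l ∈ Finset.Icc (i+1) M, b l ≤ ((M:ℤ) - i + 1) * a i := by
      nlinarith
    have hbv : b i ≤ a i := lc_le_val hb h1 h2 hval
    linarith
  · have := lc_le_m hb h1 h2
    linarith

lemma M2 : ∀ i, 1 ≤ i → i ≤ M → a i - b i ≤ a (M+1) + 1 := by
  apply downward_ind
  intro i h1 h2 IH
  rcases lt_or_ge (b i) (m:ℤ) with hbi | hge
  · have hbu := lc_upper hb h1 h2 hbi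
    have hal := lc_lower ha h1 (by omega)
    rw [sum_split hm hf ha hb h2] at hal
    have hcast : ((M+1:ℕ):ℤ) = (M:ℤ)+1 := by push_cast; ring
    rw [hcast] at hal
    -- Σc ≤ (M - i) * (g + 1)
    have hSc : (∑ l ∈ Finset.Icc (i+1) M, a l) - (∑ l ∈ Finset.Icc (i+1) M, b l)
        ≤ ((M:ℤ) - i) * (a (M+1) + 1) := by
      have hpt : ∀ l ∈ Finset.Icc (i+1) M, a l - b l ≤ a (M+1) + 1 := by
        intro l hl
        simp only [Finset.mem_Icc] at hl
        exact IH l (by omega) hl.2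
      have := Finset.sum_le_card_nsmul (Finset.Icc (i+1) M) (fun l => a l - b l) _ hpt
      rw [Finset.sum_sub_distrib, nsmul_eq_mul] at this
      rwa [card_Icc' hm hf ha hb h2] at this
    have hkey : ((M:ℤ)-i+1) * (a i - b i) < ((M:ℤ)-i+1) * (a (M+1) + 2) := by nlinarith
    have := lt_of_mul_lt_mul_left hkey (by
      have : (i:ℤ) ≤ M := by exact_mod_cast h2
      linarith)
    omega
  · have ham : a i ≤ m := lc_le_m ha h1 (by omega)
    have hg := a_top_nonneg hm hf ha hb
    linarith

lemma M3 : ∀ i, 1 ≤ i → i ≤ M → a i < m → a (M+1) ≤ a i - b i := by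
  apply downward_ind
  intro i h1 h2 IH hai
  have hSc : ((M:ℤ) - i) * a (M+1) ≤
      (∑ l ∈ Finset.Icc (i+1) M, a l) - (∑ l ∈ Finset.Icc (i+1) M, b l) := by
    have hpt : ∀ l ∈ Finset.Icc (i+1) M, a (M+1) ≤ a l - b l := by
      intro l hl
      simp only [Finset.mem_Icc] at hl
      have hla : a l ≤ a i := lc_anti hm hf ha i l h1 (by omega) (by omega)
      exact IH l (by omega) hl.2 (by linarith)
    have := Finset.card_nsmul_le_sum (Finset.Icc (i+1) M) (fun l => a l - b l) _ hpt
    rw [Finset.sum_sub_distrib, nsmul_eq_mul] at this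
    rwa [card_Icc' hm hf ha hb h2] at this
  have hau := lc_upper ha h1 (by omega) hai
  rw [sum_split hm hf ha hb h2] at hau
  have hcast : ((M+1:ℕ):ℤ) = (M:ℤ)+1 := by push_cast; ring
  rw [hcast] at hau
  have hbl := lc_lower hb h1 h2
  have hkey : ((M:ℤ)-i+1) * (b i - 1) < ((M:ℤ)-i+1) * (a i - a (M+1)) := by nlinarith
  have := lt_of_mul_lt_mul_left hkey (by
    have : (i:ℤ) ≤ M := by exact_mod_cast h2
    linarith)
  omega

lemma b_anti : ∀ i l, 1 ≤ i → i ≤ l → l ≤ M → b l ≤ b i :=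
  lc_anti hm (mu_isPart hm hf ha hb) hb

lemma c_low : ∀ i l, 1 ≤ i → i < l → l ≤ M → a i - b i ≤ a (M+1) →
    a i - b i ≤ a l - b l := by
  intro i l h1 hil hlM hcg
  rcases lt_or_ge (a l) (m:ℤ) with hal | hge
  · have := M3 hm hf ha hb l (by omega) hlM hal
    linarith
  · have hai : a i = m := by
      have h1' : a l ≤ a i := lc_anti hm hf ha i l h1 (by omega) (by omega)
      have h2' : a i ≤ m := lc_le_m ha h1 (by omega)
      linarith
    have hbb : b l ≤ b i := b_anti hm hf ha hb i l h1 (by omega) hlM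
    have h3' : a l ≤ m := lc_le_m ha (by omega) (by omega)
    linarith

end TwoCol
end Subtab

namespace Subtab
section TwoCol2
set_option linter.unusedSectionVars false

variable {M m : ℕ} {f a b : ℕ → ℤ}
variable (hm : 1 ≤ m) (hf : IsTypeAPartition (M+1) m f)
  (ha : IsLC (M+1) m f a) (hb : IsLC M m (fun i => f i - a i) b)
include hm hf ha hb

/-- the key identity: `a` (restricted) is the last column of `f - b` -/
lemma lc_next : IsLC M m (fun i => f i - b i) a := by
  intro i h1 h2
  dsimp only
  have hg := a_top_nonneg hm hf ha hb
  have hiM : (i:ℤ) ≤ M := by exact_mod_cast h2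
  have hdpos : (0:ℤ) < (M:ℤ) - i + 1 := by linarith
  have hcast : ((M+1:ℕ):ℤ) = (M:ℤ)+1 := by push_cast; ring
  -- G1
  have G1 : ((M:ℤ) - i + 1) * (a i - 1) < f i - b i + ∑ l ∈ Finset.Icc (i+1) M, a l := by
    rcases le_or_gt (a i - b i) (a (M+1)) with hcg | hcg
    · have hbl := lc_lower hb h1 h2
      have hSc : ((M:ℤ) - i) * (a i - b i) ≤
          (∑ l ∈ Finset.Icc (i+1) M, a l) - (∑ l ∈ Finset.Icc (i+1) M, b l) := by
        have hpt : ∀ l ∈ Finset.Icc (i+1) M, a i - b i ≤ a l - b l := by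
          intro l hl
          simp only [Finset.mem_Icc] at hl
          exact c_low hm hf ha hb i l h1 (by omega) hl.2 hcg
        have := Finset.card_nsmul_le_sum (Finset.Icc (i+1) M) (fun l => a l - b l) _ hpt
        rw [Finset.sum_sub_distrib, nsmul_eq_mul] at this
        rwa [card_Icc' hm hf ha hb h2] at this
      nlinarith
    · have hal := lc_lower ha h1 (by omega : i ≤ M+1)
      rw [sum_split hm hf ha hb h2, hcast] at hal
      nlinarith
  -- G2
  have G2 : a i < m → f i - b i + ∑ l ∈ Finset.Icc (i+1) M, a l ≤ ((M:ℤ) - i + 1) * a i := by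
    intro hai
    rcases le_or_gt (a i - b i) (a (M+1)) with hcg | hcg
    · have hau := lc_upper ha h1 (by omega : i ≤ M+1) hai
      rw [sum_split hm hf ha hb h2, hcast] at hau
      nlinarith
    · have hbi : b i < m := by
        by_contra hc
        push_neg at hc
        have h1' : a i ≤ m := lc_le_m ha h1 (by omega)
        linarith
      have hbu := lc_upper hb h1 h2 hbi
      have hSc : (∑ l ∈ Finset.Icc (i+1) M, a l) - (∑ l ∈ Finset.Icc (i+1) M, b l)
          ≤ ((M:ℤ) - i) * (a i - b i) := by
        have hpt : ∀ l ∈ Finset.Icc (i+1) M, a l - b l ≤ a i - b i := by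
          intro l hl
          simp only [Finset.mem_Icc] at hl
          have := M2 hm hf ha hb l (by omega) hl.2
          linarith
        have := Finset.sum_le_card_nsmul (Finset.Icc (i+1) M) (fun l => a l - b l) _ hpt
        rw [Finset.sum_sub_distrib, nsmul_eq_mul] at this
        rwa [card_Icc' hm hf ha hb h2] at this
      nlinarith
  -- conclude
  rw [denom_cast h2]
  have hceil_ge : a i ≤ ⌈(((f i - b i + ∑ l ∈ Finset.Icc (i+1) M, a l : ℤ):ℚ)
      / (((M:ℤ) - i + 1 : ℤ):ℚ))⌉ := (le_ceil_iff' hdpos).2 G1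
  rcases lt_or_ge (a i) (m:ℤ) with hai | hge
  · have hceil_le := (ceil_le_iff' hdpos).2 (G2 hai)
    exact le_antisymm (le_min (le_of_lt hai) hceil_ge)
      (le_trans (min_le_right _ _) hceil_le)
  · have haim : a i = m := le_antisymm (lc_le_m ha h1 (by omega)) hge
    rw [haim] at hceil_ge ⊢
    exact (min_eq_left hceil_ge).symm

/-- `f - b` is a type-A partition of size `(M, m)` -/
lemma nu_isPart : IsTypeAPartition M m (fun i => f i - b i) := by
  have hmu := mu_isPart hm hf ha hb
  constructor
  · intro i h1 h2
    dsimp only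
    have hbf : b i ≤ f i - a i := lc_le_f hm hmu hb i h1 h2
    have ha0 : 0 ≤ a i := lc_nonneg hm hf ha i h1 (by omega)
    have ham : a i ≤ m := lc_le_m ha h1 (by omega)
    have hmub := lc_sub_le hm hmu hb i h1 h2
    constructor
    · linarith
    · have : (m:ℤ) * ((M:ℤ) - i) + m = (m:ℤ) * ((M:ℤ) - i + 1) := by ring
      linarith
  · intro i h1 h2
    dsimp only
    have h4 := lc_sub_anti hm hmu hb i h1 (by omega)
    have h5 : a (i+1) ≤ a i := lc_anti hm hf ha i (i+1) h1 (by omega) (by omega)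
    linarith

end TwoCol2
end Subtab

namespace Subtab

lemma isPart_congr {n m : ℕ} {f g : ℕ → ℤ} (h : IsTypeAPartition n m f)
    (e : ∀ i, 1 ≤ i → i ≤ n → f i = g i) : IsTypeAPartition n m g := by
  constructor
  · intro i h1 h2
    rw [← e i h1 h2]
    exact h.1 i h1 h2
  · intro i h1 h2
    rw [← e i h1 (by omega), ← e (i+1) (by omega) (by omega)]
    exact h.2 i h1 h2

lemma tableau_unique {N m : ℕ} {f : ℕ → ℤ} {K K' : ℕ → ℕ → ℤ}
    (h : TableauRec N m f K) (h' : TableauRec N m f K') :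
    ∀ i j, 1 ≤ i → i ≤ j → j ≤ N → K i j = K' i j := by
  suffices H : ∀ t, ∀ j, j ≤ N → N - j ≤ t → ∀ i, 1 ≤ i → i ≤ j → K i j = K' i j by
    exact fun i j h1 h2 h3 => H (N - j) j h3 le_rfl i h1 h2
  intro t
  induction t with
  | zero =>
    intro j hjN ht
    apply downward_ind (N := j) (P := fun i => K i j = K' i j)
    intro i h1 hij IHi
    rw [h i j h1 hij hjN, h' i j h1 hij hjN]
    have e1 : ∑ l ∈ Finset.Icc (j+1) N, K i l = ∑ l ∈ Finset.Icc (j+1) N, K' i l := by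
      rw [Finset.Icc_eq_empty (by omega : ¬ j+1 ≤ N)]
      simp
    have e2 : ∑ l ∈ Finset.Icc (i+1) j, K l j = ∑ l ∈ Finset.Icc (i+1) j, K' l j := by
      apply Finset.sum_congr rfl
      intro l hl
      simp only [Finset.mem_Icc] at hl
      exact IHi l (by omega) hl.2
    rw [e1, e2]
  | succ t IH =>
    intro j hjN ht
    apply downward_ind (N := j) (P := fun i => K i j = K' i j)
    intro i h1 hij IHi
    rw [h i j h1 hij hjN, h' i j h1 hij hjN]
    have e1 : ∑ l ∈ Finset.Icc (j+1) N, K i l = ∑ l ∈ Finset.Icc (j+1) N, K' i l := by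
      apply Finset.sum_congr rfl
      intro l hl
      simp only [Finset.mem_Icc] at hl
      exact IH l hl.2 (by omega) i h1 (by omega)
    have e2 : ∑ l ∈ Finset.Icc (i+1) j, K l j = ∑ l ∈ Finset.Icc (i+1) j, K' l j := by
      apply Finset.sum_congr rfl
      intro l hl
      simp only [Finset.mem_Icc] at hl
      exact IHi l (by omega) hl.2
    rw [e1, e2]

end Subtab


open Subtab

/-- Parts (iii) and (iv) of the subtableau lemma: for `lam ∈ P^m_n` with tableau entries
`k_{i,j} = k_{i,j}(lam)`,
(iii) `lam⁽³⁾` with parts `lam⁽³⁾_i = lam_i − k_{i,n} − k_{i,n−1}` (for `1 ≤ i ≤ n−2`)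
lies in `P^m_{n−2}` and `k_{i,j}(lam⁽³⁾) = k_{i,j}` for all `1 ≤ i ≤ j ≤ n−2`;
(iv) `lam⁽⁴⁾` with parts `lam⁽⁴⁾_i = lam_i − k_{i,n−1}` (for `1 ≤ i ≤ n−1`) lies in
`P^m_{n−1}`, with `k_{i,j}(lam⁽⁴⁾) = k_{i,j}` for `1 ≤ i ≤ j ≤ n−2` and
`k_{i,n−1}(lam⁽⁴⁾) = k_{i,n}` for `1 ≤ i ≤ n−1`. -/
theorem subtableau_lemma_parts_three_four (n m : ℕ) (hn : 2 ≤ n) (hm : 1 ≤ m)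
    (lam : ℕ → ℤ) (hlam : IsTypeAPartition n m lam)
    (K : ℕ → ℕ → ℤ) (hK : TableauRec n m lam K) :
    (IsTypeAPartition (n - 2) m (fun i => lam i - K i n - K i (n - 1)) ∧
      ∀ K3 : ℕ → ℕ → ℤ, TableauRec (n - 2) m (fun i => lam i - K i n - K i (n - 1)) K3 →
        ∀ i j : ℕ, 1 ≤ i → i ≤ j → j ≤ n - 2 → K3 i j = K i j) ∧
    (IsTypeAPartition (n - 1) m (fun i => lam i - K i (n - 1)) ∧
      ∀ K4 : ℕ → ℕ → ℤ, TableauRec (n - 1) m (fun i => lam i - K i (n - 1)) K4 →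
        (∀ i j : ℕ, 1 ≤ i → i ≤ j → j ≤ n - 2 → K4 i j = K i j) ∧
        (∀ i : ℕ, 1 ≤ i → i ≤ n - 1 → K4 i (n - 1) = K i n)) := by
  obtain ⟨p, rfl⟩ : ∃ p, n = p + 2 := ⟨n - 2, by omega⟩
  simp only [show p + 2 - 1 = p + 1 from rfl, show p + 2 - 2 = p from rfl]
  -- column n is LC of lam
  have ha : IsLC (p+2) m lam (fun i => K i (p+2)) := by
    intro i h1 h2
    dsimp only
    have h := hK i (p+2) h1 h2 le_rfl
    have e : lam i - ∑ l ∈ Finset.Icc (p+2+1) (p+2), K i l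
          + ∑ l ∈ Finset.Icc (i+1) (p+2), K l (p+2)
        = lam i + ∑ l ∈ Finset.Icc (i+1) (p+2), K l (p+2) := by
      rw [Finset.Icc_eq_empty (by omega : ¬ p+2+1 ≤ p+2), Finset.sum_empty]
      ring
    rw [e] at h
    exact h
  -- column n-1 is LC of lam - (column n)
  have hb : IsLC (p+1) m (fun i => lam i - K i (p+2)) (fun i => K i (p+1)) := by
    intro i h1 h2
    dsimp only
    have h := hK i (p+1) h1 h2 (by omega)
    have e : lam i - ∑ l ∈ Finset.Icc (p+1+1) (p+2), K i l
          + ∑ l ∈ Finset.Icc (i+1) (p+1), K l (p+1)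
        = (lam i - K i (p+2)) + ∑ l ∈ Finset.Icc (i+1) (p+1), K l (p+1) := by
      rw [show p+1+1 = p+2 from rfl, Finset.Icc_self, Finset.sum_singleton]
      try ring
    rw [e] at h
    exact h
  have hA2 : IsLC (p+1) m (fun i => lam i - K i (p+1)) (fun i => K i (p+2)) :=
    lc_next (M := p+1) hm hlam ha hb
  have hnu : IsTypeAPartition (p+1) m (fun i => lam i - K i (p+1)) :=
    nu_isPart (M := p+1) hm hlam ha hb
  have hlam3 : IsTypeAPartition p m (fun i => lam i - K i (p+2) - K i (p+1)) := by
    have h := lc_sub_isPart (N := p+1) hm hnu hA2 (by omega)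
    exact isPart_congr h (fun i _ _ => by ring)
  -- TableauRec for lam3 with K itself
  have hTR3 : TableauRec p m (fun i => lam i - K i (p+2) - K i (p+1)) K := by
    intro i j h1 hij hj
    rw [hK i j h1 hij (by omega)]
    have e : lam i - ∑ l ∈ Finset.Icc (j+1) (p+2), K i l + ∑ l ∈ Finset.Icc (i+1) j, K l j
        = (fun i => lam i - K i (p+2) - K i (p+1)) i
          - ∑ l ∈ Finset.Icc (j+1) p, K i l + ∑ l ∈ Finset.Icc (i+1) j, K l j := by
      dsimp only
      rw [show p+2 = (p+1)+1 from rfl, Finset.sum_Icc_succ_top (by omega : j+1 ≤ p+1+1),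
        Finset.sum_Icc_succ_top (by omega : j+1 ≤ p+1)]
      ring
    rw [e]
  -- TableauRec for lam4 with modified K
  have hTR4 : TableauRec (p+1) m (fun i => lam i - K i (p+1))
      (fun i j => if j = p+1 then K i (p+2) else K i j) := by
    intro i j h1 hij hj
    by_cases hjp : j = p+1
    · subst hjp
      have hc := hA2 i h1 (by omega)
      dsimp only at hc
      have eL : (fun i j => if j = p+1 then K i (p+2) else K i j) i (p+1) = K i (p+2) := by
        simp
      have eE : ∑ l ∈ Finset.Icc (p+1+1) (p+1),
          (fun i j => if j = p+1 then K i (p+2) else K i j) i l = 0 := by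
        rw [Finset.Icc_eq_empty (by omega : ¬ p+1+1 ≤ p+1), Finset.sum_empty]
      have eS : ∑ l ∈ Finset.Icc (i+1) (p+1),
          (fun i j => if j = p+1 then K i (p+2) else K i j) l (p+1)
          = ∑ l ∈ Finset.Icc (i+1) (p+1), K l (p+2) := by
        apply Finset.sum_congr rfl
        intro l _
        simp
      rw [eL, eE, eS]
      dsimp only
      rw [sub_zero]
      exact hc
    · have eL : (fun i j => if j = p+1 then K i (p+2) else K i j) i j = K i j := by
        simp [hjp]
      have eRow : ∑ l ∈ Finset.Icc (j+1) (p+1),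
          (fun i j => if j = p+1 then K i (p+2) else K i j) i l
          = (∑ l ∈ Finset.Icc (j+1) p, K i l) + K i (p+2) := by
        rw [Finset.sum_Icc_succ_top (by omega : j+1 ≤ p+1)]
        congr 1
        · apply Finset.sum_congr rfl
          intro l hl
          simp only [Finset.mem_Icc] at hl
          simp only []
          rw [if_neg (by omega)]
        · simp
      have eCol : ∑ l ∈ Finset.Icc (i+1) j,
          (fun i j => if j = p+1 then K i (p+2) else K i j) l j
          = ∑ l ∈ Finset.Icc (i+1) j, K l j := by
        apply Finset.sum_congr rfl
        intro l _
        simp only []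
        rw [if_neg hjp]
      rw [eL, eRow, eCol]
      dsimp only
      rw [hK i j h1 hij (by omega)]
      have e2 : lam i - ∑ l ∈ Finset.Icc (j+1) (p+2), K i l + ∑ l ∈ Finset.Icc (i+1) j, K l j
          = lam i - K i (p+1) - ((∑ l ∈ Finset.Icc (j+1) p, K i l) + K i (p+2))
            + ∑ l ∈ Finset.Icc (i+1) j, K l j := by
        rw [show p+2 = (p+1)+1 from rfl, Finset.sum_Icc_succ_top (by omega : j+1 ≤ p+1+1),
          Finset.sum_Icc_succ_top (by omega : j+1 ≤ p+1)]
        ring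
      rw [e2]
  refine ⟨⟨hlam3, ?_⟩, ⟨hnu, ?_⟩⟩
  · intro K3 h3 i j h1 h2 h3'
    exact tableau_unique h3 hTR3 i j h1 h2 h3'
  · intro K4 h4
    constructor
    · intro i j h1 h2 h3'
      have := tableau_unique h4 hTR4 i j h1 h2 (by omega)
      rwa [if_neg (by omega : ¬ j = p+1)] at this
    · intro i h1 h2
      have := tableau_unique h4 hTR4 i (p+1) h1 h2 le_rfl
      rwa [if_pos rfl] at this
end

section
/- For every λ ∈ P^m_n, the family (k_{i,j}(λ))_{1≤i≤j≤n} is a type-A Shi tableau of size (n,m); that is, 0 ≤ k_{i,j}(λ) ≤ m for all i ≤ j, and for all 1 ≤ i ≤ ℓ < j ≤ n: if k_{i,ℓ}(λ) + k_{ℓ+1,j}(λ) < m then k_{i,j}(λ) − (k_{i,ℓ}(λ) + k_{ℓ+1,j}(λ)) ∈ {0,1}, and if k_{i,ℓ}(λ) + k_{ℓ+1,j}(λ) ≥ m then k_{i,j}(λ) = m. -/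
/-- A type-A Shi tableau of size `(n,m)`: a triangular family `(k_{i,j})_{1 ≤ i ≤ j ≤ n}`
of integers with `0 ≤ k_{i,j} ≤ m` satisfying the Shi conditions: for all
`1 ≤ i ≤ l < j ≤ n`, if `k_{i,l} + k_{l+1,j} < m` then
`k_{i,j} − (k_{i,l} + k_{l+1,j}) ∈ {0,1}`, and if `k_{i,l} + k_{l+1,j} ≥ m`
then `k_{i,j} = m`. -/
def IsShiTableau (n m : ℕ) (K : ℕ → ℕ → ℤ) : Prop :=
  (∀ i j : ℕ, 1 ≤ i → i ≤ j → j ≤ n → 0 ≤ K i j ∧ K i j ≤ (m : ℤ)) ∧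
  ∀ i l j : ℕ, 1 ≤ i → i ≤ l → l < j → j ≤ n →
    (K i l + K (l + 1) j < (m : ℤ) →
      K i j - (K i l + K (l + 1) j) = 0 ∨ K i j - (K i l + K (l + 1) j) = 1) ∧
    ((m : ℤ) ≤ K i l + K (l + 1) j → K i j = (m : ℤ))

namespace ShiTabAux

open Finset

private lemma ceil_le_iff {S c d : ℤ} (hd : 0 < d) :
    ⌈(S : ℚ) / (d : ℚ)⌉ ≤ c ↔ S ≤ c * d := by
  rw [Int.ceil_le, div_le_iff₀ (by exact_mod_cast hd)]
  constructor <;> intro h <;> exact_mod_cast h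

private lemma le_ceil_iff {S c d : ℤ} (hd : 0 < d) :
    c ≤ ⌈(S : ℚ) / (d : ℚ)⌉ ↔ (c - 1) * d < S := by
  have hd' : (0:ℚ) < (d:ℚ) := by exact_mod_cast hd
  constructor
  · intro h
    have h2 : c - 1 < ⌈(S : ℚ) / (d : ℚ)⌉ := by omega
    rw [Int.lt_ceil, lt_div_iff₀ hd'] at h2
    exact_mod_cast h2
  · intro h
    have h3 : ((c - 1 : ℤ) : ℚ) < (S : ℚ) / (d : ℚ) := by
      rw [lt_div_iff₀ hd']; exact_mod_cast h
    have := Int.lt_ceil.mpr h3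
    omega

private lemma sum_split (f : ℕ → ℤ) {a b c : ℕ} (h1 : a ≤ b + 1) (h2 : b ≤ c) :
    ∑ t ∈ Icc a c, f t = (∑ t ∈ Icc a b, f t) + ∑ t ∈ Icc (b+1) c, f t := by
  have hu : Icc a c = Icc a b ∪ Icc (b+1) c := by
    ext x; simp only [mem_Icc, mem_union]; omega
  rw [hu, Finset.sum_union]
  exact Finset.disjoint_left.mpr (by intro x hx hx'; simp only [mem_Icc] at hx hx'; omega)

/-- `R i j = lam i - Σ_{t=j}^n k_{i,t}`, the remainder of row `i` left of column `j`. -/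
private def Rf (n : ℕ) (lam : ℕ → ℤ) (K : ℕ → ℕ → ℤ) (i j : ℕ) : ℤ :=
  lam i - ∑ t ∈ Icc j n, K i t

/-- The quantity whose ceiling-average defines `K i j`. -/
private def Sf (n : ℕ) (lam : ℕ → ℤ) (K : ℕ → ℕ → ℤ) (i j : ℕ) : ℤ :=
  Rf n lam K i (j+1) + ∑ t ∈ Icc (i+1) j, K t j

section RecFacts

variable {n m : ℕ} {lam : ℕ → ℤ} {K : ℕ → ℕ → ℤ}

private lemma rec_eq (hK : TableauRec n m lam K)
    {i j : ℕ} (hi : 1 ≤ i) (hij : i ≤ j) (hj : j ≤ n) :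
    K i j = min (m:ℤ) ⌈((Sf n lam K i j : ℤ) : ℚ) / ((((j:ℤ) - i + 1 : ℤ)) : ℚ)⌉ := by
  have h := hK i j hi hij hj
  have hc : ((j:ℚ) - (i:ℚ) + 1) = ((((j:ℤ) - i + 1 : ℤ)) : ℚ) := by push_cast; ring
  rw [hc] at h
  exact h

private lemma hd_pos {i j : ℕ} (hij : i ≤ j) : (0:ℤ) < (j:ℤ) - i + 1 := by omega

private lemma k_le_m (hK : TableauRec n m lam K)
    {i j : ℕ} (hi : 1 ≤ i) (hij : i ≤ j) (hj : j ≤ n) : K i j ≤ m := by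
  rw [rec_eq hK hi hij hj]; exact min_le_left _ _

private lemma k_le_of (hK : TableauRec n m lam K)
    {i j : ℕ} (hi : 1 ≤ i) (hij : i ≤ j) (hj : j ≤ n) {c : ℤ}
    (hc : Sf n lam K i j ≤ c * ((j:ℤ) - i + 1)) : K i j ≤ c := by
  rw [rec_eq hK hi hij hj]
  exact le_trans (min_le_right _ _) ((ceil_le_iff (hd_pos hij)).mpr hc)

private lemma le_k_of (hK : TableauRec n m lam K)
    {i j : ℕ} (hi : 1 ≤ i) (hij : i ≤ j) (hj : j ≤ n) {c : ℤ}
    (hcm : c ≤ m) (hlt : (c - 1) * ((j:ℤ) - i + 1) < Sf n lam K i j) : c ≤ K i j := by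
  rw [rec_eq hK hi hij hj]
  exact le_min hcm ((le_ceil_iff (hd_pos hij)).mpr hlt)

private lemma k_lb (hK : TableauRec n m lam K)
    {i j : ℕ} (hi : 1 ≤ i) (hij : i ≤ j) (hj : j ≤ n) :
    (K i j - 1) * ((j:ℤ) - i + 1) < Sf n lam K i j := by
  have h := rec_eq hK hi hij hj
  have : K i j ≤ ⌈((Sf n lam K i j : ℤ) : ℚ) / ((((j:ℤ) - i + 1 : ℤ)) : ℚ)⌉ := by
    rw [h]; exact min_le_right _ _
  exact (le_ceil_iff (hd_pos hij)).mp this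

private lemma k_ub (hK : TableauRec n m lam K)
    {i j : ℕ} (hi : 1 ≤ i) (hij : i ≤ j) (hj : j ≤ n) (hlt : K i j < m) :
    Sf n lam K i j ≤ K i j * ((j:ℤ) - i + 1) := by
  have h := rec_eq hK hi hij hj
  have hceil : ⌈((Sf n lam K i j : ℤ) : ℚ) / ((((j:ℤ) - i + 1 : ℤ)) : ℚ)⌉ ≤ K i j := by
    rcases le_or_gt (m:ℤ) ⌈((Sf n lam K i j : ℤ) : ℚ) / ((((j:ℤ) - i + 1 : ℤ)) : ℚ)⌉ with h1 | h1
    · rw [min_eq_left h1] at h; omega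
    · rw [min_eq_right h1.le] at h; omega
  exact (ceil_le_iff (hd_pos hij)).mp hceil

end RecFacts

section Phase1

variable {n m : ℕ} {lam : ℕ → ℤ} {K : ℕ → ℕ → ℤ}

/-- The package of facts about row `i` proven in Phase 1. -/
private def RowP (n m : ℕ) (lam : ℕ → ℤ) (K : ℕ → ℕ → ℤ) (i : ℕ) : Prop :=
  (∀ j, i ≤ j → j ≤ n → 0 ≤ K i j ∧ K i j ≤ m) ∧
  (∀ j, i ≤ j → j ≤ n + 1 → 0 ≤ Rf n lam K i j ∧ Rf n lam K i j ≤ (m:ℤ) * ((j:ℤ) - i)) ∧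
  (∀ j, i + 1 ≤ j → j ≤ n + 1 → i < n → Rf n lam K (i+1) j ≤ Rf n lam K i j)

private lemma R_step {i j : ℕ} (hij : i ≤ j) (hj : j ≤ n) :
    Rf n lam K i j = Rf n lam K i (j+1) - K i j := by
  unfold Rf
  rw [sum_split (fun t => K i t) (a := j) (b := j) (c := n) (by omega) hj]
  rw [Finset.Icc_self, Finset.sum_singleton]
  ring

set_option maxHeartbeats 2000000 in
private lemma rows (hm : 1 ≤ m) (hlam : IsTypeAPartition n m lam)
    (hK : TableauRec n m lam K) :
    ∀ i, 1 ≤ i → i ≤ n → RowP n m lam K i := by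
  have main : ∀ g i, 1 ≤ i → i ≤ n → n - i = g → RowP n m lam K i := by
    intro g
    induction g using Nat.strong_induction_on with
    | _ g IH =>
      intro i hi1 hin hg
      have below : ∀ t, i < t → t ≤ n → RowP n m lam K t := by
        intro t ht1 ht2
        exact IH (n - t) (by omega) t (by omega) ht2 rfl
      -- nonnegativity of column sums below row i
      have hCpos : ∀ j, i ≤ j → j ≤ n → 0 ≤ ∑ t ∈ Icc (i+1) j, K t j := by
        intro j hij hj
        apply Finset.sum_nonneg
        intro t ht
        rw [mem_Icc] at ht
        exact ((below t (by omega) (by omega)).1 j (by omega) hj).1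
      -- inner downward induction on columns
      have inner : ∀ g' j, i ≤ j → j + g' = n + 1 →
          ((0 ≤ Rf n lam K i j ∧ Rf n lam K i j ≤ (m:ℤ) * ((j:ℤ) - i)) ∧
           (∀ j', j ≤ j' → j' ≤ n → 0 ≤ K i j' ∧ K i j' ≤ m) ∧
           (i + 1 ≤ j → i < n → Rf n lam K (i+1) j ≤ Rf n lam K i j)) := by
        intro g'
        induction g' with
        | zero =>
          intro j hij hjg
          have hj : j = n + 1 := by omega
          subst hj
          have hR : Rf n lam K i (n+1) = lam i := by
            unfold Rf
            rw [Finset.Icc_eq_empty (by omega)]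
            simp
          refine ⟨⟨?_, ?_⟩, ?_, ?_⟩
          · rw [hR]; exact (hlam.1 i hi1 hin).1
          · rw [hR]
            have := (hlam.1 i hi1 hin).2
            have hcast : (m:ℤ) * ((n:ℤ) - i + 1) = (m:ℤ) * (((n+1:ℕ):ℤ) - i) := by
              push_cast; ring
            rw [hcast] at this; exact this
          · intro j' h1 h2; omega
          · intro _ hiltn
            have hR' : Rf n lam K (i+1) (n+1) = lam (i+1) := by
              unfold Rf
              rw [Finset.Icc_eq_empty (by omega)]
              simp
            rw [hR, hR']
            exact hlam.2 i hi1 hiltn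
        | succ g' ihg =>
          intro j hij hjg
          have hjn : j ≤ n := by omega
          have hQ := ihg (j+1) (by omega) (by omega)
          have hR1 := hQ.1
          set R1 := Rf n lam K i (j+1) with hR1def
          have hRstep : Rf n lam K i j = R1 - K i j := R_step hij hjn
          have hC := hCpos j hij hjn
          have hd : (0:ℤ) < (j:ℤ) - i + 1 := by omega
          have hS0 : 0 ≤ Sf n lam K i j := by
            unfold Sf; rw [← hR1def]; exact add_nonneg hR1.1 hC
          have hK0 : 0 ≤ K i j := by
            apply le_k_of hK hi1 hij hjn (c := 0)
            · exact_mod_cast Nat.zero_le m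
            · linarith
          have hKm : K i j ≤ m := k_le_m hK hi1 hij hjn
          -- upper bound on new remainder
          have hP3 : Rf n lam K i j ≤ (m:ℤ) * ((j:ℤ) - i) := by
            have hub : R1 ≤ (m:ℤ) * ((j:ℤ) - i + 1) := by
              have := hR1.2; push_cast at this ⊢; linarith
            have hkey : R1 - (m:ℤ) * ((j:ℤ) - i) ≤ K i j := by
              apply le_k_of hK hi1 hij hjn
              · have : (0:ℤ) ≤ R1 := hR1.1
                push_cast at hub ⊢
                linarith
              · have hSge : R1 ≤ Sf n lam K i j := by
                  unfold Sf; rw [← hR1def]; linarith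
                have hx : (0:ℤ) ≤ (j:ℤ) - i := by omega
                have h1 : (0:ℤ) ≤ ((m:ℤ) * ((j:ℤ) - i + 1) - R1) * ((j:ℤ) - i) :=
                  mul_nonneg (by linarith) hx
                nlinarith [h1, hSge, hx]
            rw [hRstep]; linarith
          -- monotone comparison with row i+1
          have hP5 : i + 1 ≤ j → i < n → Rf n lam K (i+1) j ≤ Rf n lam K i j := by
            intro hi1j hiltn
            have hrow1 := below (i+1) (by omega) (by omega)
            set κ := K (i+1) j with hκdef
            set ρ := Rf n lam K (i+1) (j+1) with hρdef
            have hκb : 0 ≤ κ ∧ κ ≤ m := hrow1.1 j (by omega) hjn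
            have hstep1 : Rf n lam K (i+1) j = ρ - κ := R_step (by omega) hjn
            have hρR1 : ρ ≤ R1 := hQ.2.2 (by omega) hiltn
            -- split C at its first term
            have hCsplit : ∑ t ∈ Icc (i+1) j, K t j
                = κ + ∑ t ∈ Icc (i+1+1) j, K t j := by
              rw [sum_split (fun t => K t j) (a := i+1) (b := i+1) (c := j)
                (by omega) (by omega : i + 1 ≤ j)]
              rw [Finset.Icc_self, Finset.sum_singleton]
            rcases eq_or_lt_of_le hκb.2 with hκm | hκm
            · -- κ = m
              have : K i j ≤ κ := by rw [hκm]; exact hKm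
              rw [hRstep, hstep1]; linarith
            · -- κ < m
              have hub1 : Sf n lam K (i+1) j ≤ κ * ((j:ℤ) - (i+1) + 1) :=
                k_ub hK (by omega) (by omega) hjn hκm
              have hSexp : Sf n lam K (i+1) j = ρ + ∑ t ∈ Icc (i+1+1) j, K t j := by
                unfold Sf; rw [← hρdef]
              have hCub : ∑ t ∈ Icc (i+1) j, K t j ≤ κ * ((j:ℤ) - i + 1) - ρ := by
                rw [hCsplit]
                have h2 : ρ + ∑ t ∈ Icc (i+1+1) j, K t j ≤ κ * (((i+1:ℕ):ℤ) - (i+1) + 1 + ((j:ℤ) - (i+1))) := by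
                  have := hub1
                  rw [hSexp] at this
                  have hring : κ * ((j:ℤ) - ((i+1:ℕ):ℤ) + 1) = κ * (((i+1:ℕ):ℤ) - (i+1) + 1 + ((j:ℤ) - (i+1))) := by
                    push_cast; ring
                  linarith [this, hring.le, hring.ge]
                push_cast at h2 ⊢
                linarith
              have hkle : K i j ≤ κ + R1 - ρ := by
                apply k_le_of hK hi1 hij hjn
                have hSle : Sf n lam K i j ≤ R1 + (κ * ((j:ℤ) - i + 1) - ρ) := by
                  unfold Sf; rw [← hR1def]; linarith
                have hprod : (0:ℤ) ≤ (R1 - ρ) * ((j:ℤ) - i) :=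
                  mul_nonneg (by linarith) (by omega)
                nlinarith [hprod, hSle]
              rw [hRstep, hstep1]; linarith
          have hP2lo : 0 ≤ Rf n lam K i j := by
            rcases eq_or_lt_of_le hij with heq | hlt
            · -- j = i : use d = 1, C = 0
              have hCz : ∑ t ∈ Icc (i+1) j, K t j = 0 := by
                rw [Finset.Icc_eq_empty (by omega)]; simp
              have hkR : K i j ≤ R1 := by
                apply k_le_of hK hi1 hij hjn
                unfold Sf; rw [← hR1def, hCz]
                have h1 : ((j:ℤ) - i + 1) = 1 := by omega
                rw [h1, mul_one]; linarith [hR1.1]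
              rw [hRstep]; linarith
            · -- j > i
              have hiltn : i < n := by omega
              have h1 := hP5 (by omega) hiltn
              have hrow1 := below (i+1) (by omega) (by omega)
              have h2 := (hrow1.2.1 j (by omega) (by omega)).1
              linarith
          refine ⟨⟨hP2lo, hP3⟩, ?_, hP5⟩
          intro j' h1 h2
          rcases eq_or_lt_of_le h1 with heq | hlt
          · subst heq; exact ⟨hK0, hKm⟩
          · exact hQ.2.1 j' (by omega) h2
      refine ⟨?_, ?_, ?_⟩
      · intro j h1 h2
        exact (inner (n + 1 - j) j h1 (by omega)).2.1 j le_rfl h2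
      · intro j h1 h2
        exact (inner (n + 1 - j) j h1 (by omega)).1
      · intro j h1 h2 h3
        exact (inner (n + 1 - j) j (by omega) (by omega)).2.2 h1 h3
  intro i hi1 hin
  exact main (n - i) i hi1 hin rfl

end Phase1


section Phase2

variable {n m : ℕ} {lam : ℕ → ℤ} {K : ℕ → ℕ → ℤ}

/-- The hook sum at `(i,j)`. -/
private def Hf (K : ℕ → ℕ → ℤ) (i j : ℕ) : ℤ :=
  (∑ t ∈ Icc i j, K i t) + ∑ t ∈ Icc (i+1) j, K t j

private lemma S_eq_H (hrows : ∀ i, 1 ≤ i → i ≤ n → RowP n m lam K i)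
    {i j : ℕ} (hi : 1 ≤ i) (hij : i ≤ j) (hj : j ≤ n) :
    Sf n lam K i j = Hf K i j := by
  have h := (hrows i hi (hij.trans hj)).2.1 i le_rfl (by omega)
  have hz : (m:ℤ) * ((i:ℤ) - i) = 0 := by ring
  have h0 : Rf n lam K i i = 0 := le_antisymm (by rw [← hz]; exact h.2) h.1
  have hsum : lam i = ∑ t ∈ Icc i n, K i t := by
    unfold Rf at h0; linarith
  have hsplit : ∑ t ∈ Icc i n, K i t
      = ∑ t ∈ Icc i j, K i t + ∑ t ∈ Icc (j+1) n, K i t :=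
    sum_split _ (by omega) hj
  have hkey : lam i - ∑ t ∈ Icc (j+1) n, K i t = ∑ t ∈ Icc i j, K i t := by
    rw [hsum, hsplit]; ring
  unfold Sf Rf Hf
  rw [hkey]

private lemma min_lt_aux {x y z : ℤ} (h1 : min z x ≤ y) (h2 : y < z) : x ≤ y := by
  rcases le_total z x with h | h
  · rw [min_eq_left h] at h1; omega
  · rw [min_eq_right h] at h1; exact h1

private lemma sum_ub {a b : ℕ} {f g : ℕ → ℤ} {x : ℤ}
    (h : ∀ t, a ≤ t → t ≤ b → f t ≤ g t + x) :
    ∑ t ∈ Icc a b, f t ≤ (∑ t ∈ Icc a b, g t) + ((b + 1 - a : ℕ) : ℤ) * x := by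
  have h1 : ∑ t ∈ Icc a b, f t ≤ ∑ t ∈ Icc a b, (g t + x) :=
    Finset.sum_le_sum (fun t ht => by rw [mem_Icc] at ht; exact h t ht.1 ht.2)
  rw [Finset.sum_add_distrib, Finset.sum_const, Nat.card_Icc, nsmul_eq_mul] at h1
  exact h1

private lemma sum_lb {a b : ℕ} {f g : ℕ → ℤ} {x : ℤ}
    (h : ∀ t, a ≤ t → t ≤ b → g t + x ≤ f t) :
    (∑ t ∈ Icc a b, g t) + ((b + 1 - a : ℕ) : ℤ) * x ≤ ∑ t ∈ Icc a b, f t := by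
  have h1 : ∑ t ∈ Icc a b, (g t + x) ≤ ∑ t ∈ Icc a b, f t :=
    Finset.sum_le_sum (fun t ht => by rw [mem_Icc] at ht; exact h t ht.1 ht.2)
  rw [Finset.sum_add_distrib, Finset.sum_const, Nat.card_Icc, nsmul_eq_mul] at h1
  exact h1

set_option maxHeartbeats 4000000 in
private lemma phase2 (hm : 1 ≤ m) (hK : TableauRec n m lam K)
    (hrows : ∀ i, 1 ≤ i → i ≤ n → RowP n m lam K i) :
    ∀ e i j, 1 ≤ i → i ≤ j → j ≤ n → j - i = e →
      (∀ t, i ≤ t → t ≤ j → K i t ≤ K i j) ∧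
      (∀ t, i ≤ t → t ≤ j → K t j ≤ K i j) ∧
      (∀ l, i ≤ l → l < j →
        min (m:ℤ) (K i l + K (l+1) j) ≤ K i j ∧
        (K i l + K (l+1) j < m → K i j ≤ K i l + K (l+1) j + 1)) := by
  have pos : ∀ p q, 1 ≤ p → p ≤ q → q ≤ n → 0 ≤ K p q ∧ K p q ≤ m :=
    fun p q h1 h2 h3 => (hrows p h1 (h2.trans h3)).1 q h2 h3
  -- H-form recursion facts
  have hf1 : ∀ p q, 1 ≤ p → p ≤ q → q ≤ n →
      (K p q - 1) * ((q:ℤ) - p + 1) < Hf K p q := by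
    intro p q h1 h2 h3
    have := k_lb hK h1 h2 h3
    rwa [S_eq_H hrows h1 h2 h3] at this
  have hf2 : ∀ p q, 1 ≤ p → p ≤ q → q ≤ n → K p q < m →
      Hf K p q ≤ K p q * ((q:ℤ) - p + 1) := by
    intro p q h1 h2 h3 h4
    have := k_ub hK h1 h2 h3 h4
    rwa [S_eq_H hrows h1 h2 h3] at this
  have hf4 : ∀ p q, 1 ≤ p → p ≤ q → q ≤ n → ∀ c : ℤ,
      Hf K p q ≤ c * ((q:ℤ) - p + 1) → K p q ≤ c := by
    intro p q h1 h2 h3 c h4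
    exact k_le_of hK h1 h2 h3 (by rwa [S_eq_H hrows h1 h2 h3])
  intro e
  induction e using Nat.strong_induction_on with
  | _ e IH =>
    intro i j hi hij hjn he
    rcases Nat.eq_or_lt_of_le hij with heq | hlt
    · refine ⟨fun t h1 h2 => ?_, fun t h1 h2 => ?_, fun l h1 h2 => ?_⟩
      · rw [show t = j from by omega]
      · rw [show t = i from by omega]
      · exact absurd h2 (by omega)
    · obtain ⟨j₀, rfl⟩ : ∃ j₀, j = j₀ + 1 := ⟨j - 1, by omega⟩
      have hij0 : i ≤ j₀ := by omega
      have hj0n : j₀ ≤ n := by omega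
      have he1 : 1 ≤ e := by omega
      -- accessors to the strong induction hypothesis
      have Afull : ∀ p q, 1 ≤ p → p ≤ q → q ≤ n → q - p < e →
          ∀ t, p ≤ t → t ≤ q → K p t ≤ K p q :=
        fun p q h1 h2 h3 h4 => (IH (q - p) h4 p q h1 h2 h3 rfl).1
      have Bfull : ∀ p q, 1 ≤ p → p ≤ q → q ≤ n → q - p < e →
          ∀ t, p ≤ t → t ≤ q → K t q ≤ K p q :=
        fun p q h1 h2 h3 h4 => (IH (q - p) h4 p q h1 h2 h3 rfl).2.1
      have shiLo : ∀ p l q, 1 ≤ p → p ≤ l → l < q → q ≤ n → q - p < e →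
          min (m:ℤ) (K p l + K (l+1) q) ≤ K p q :=
        fun p l q h1 h2 h3 h4 h5 =>
          ((IH (q - p) h5 p q h1 (by omega) h4 rfl).2.2 l h2 h3).1
      have shiUp : ∀ p l q, 1 ≤ p → p ≤ l → l < q → q ≤ n → q - p < e →
          K p q ≤ K p l + K (l+1) q + 1 := by
        intro p l q h1 h2 h3 h4 h5
        have hs := ((IH (q - p) h5 p q h1 (by omega) h4 rfl).2.2 l h2 h3).2
        rcases lt_or_ge (K p l + K (l+1) q) (m:ℤ) with hc | hc
        · exact hs hc
        · exact le_trans (pos p q h1 (by omega) h4).2 (by linarith)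
      -- row monotonicity single step : K i j₀ ≤ K i (j₀+1)
      have hrowsplit : ∑ t ∈ Icc i (j₀+1), K i t
          = ∑ t ∈ Icc i j₀, K i t + K i (j₀+1) := by
        rw [sum_split (fun t => K i t) (a := i) (b := j₀) (c := j₀+1) (by omega) (by omega)]
        rw [Finset.Icc_self, Finset.sum_singleton]
      have hcolsplit : ∑ t ∈ Icc (i+1) (j₀+1), K t (j₀+1)
          = ∑ t ∈ Icc (i+1) j₀, K t (j₀+1) + K (j₀+1) (j₀+1) := by
        rw [sum_split (fun t => K t (j₀+1)) (a := i+1) (b := j₀) (c := j₀+1) (by omega) (by omega)]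
        rw [Finset.Icc_self, Finset.sum_singleton]
      have mrow : K i j₀ ≤ K i (j₀+1) := by
        rcases lt_or_ge (K i (j₀+1)) (m:ℤ) with hc | hc
        · have hub := hf2 i (j₀+1) hi (by omega) hjn hc
          have hcolmono : ∑ t ∈ Icc (i+1) j₀, K t j₀
              ≤ ∑ t ∈ Icc (i+1) j₀, K t (j₀+1) := by
            apply Finset.sum_le_sum
            intro t ht; rw [mem_Icc] at ht
            exact Afull t (j₀+1) (by omega) (by omega) hjn (by omega) j₀ (by omega) (by omega)
          have hKjj : 0 ≤ K (j₀+1) (j₀+1) := (pos _ _ (by omega) le_rfl hjn).1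
          apply hf4 i j₀ hi hij0 hj0n
          have hHle : Hf K i j₀ ≤ K i (j₀+1) * (((j₀+1:ℕ):ℤ) - i + 1) - K i (j₀+1) := by
            unfold Hf at hub ⊢
            rw [hrowsplit, hcolsplit] at hub
            linarith
          push_cast at hHle ⊢
          linarith only [hHle]
        · exact le_trans (pos i j₀ hi hij0 hj0n).2 hc
      have A : ∀ t, i ≤ t → t ≤ j₀ + 1 → K i t ≤ K i (j₀+1) := by
        intro t h1 h2
        rcases Nat.eq_or_lt_of_le h2 with h3 | h3
        · rw [h3]
        · exact le_trans (Afull i j₀ hi hij0 hj0n (by omega) t h1 (by omega)) mrow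
      -- column monotonicity single step : K (i+1) (j₀+1) ≤ K i (j₀+1)
      have mcol : K (i+1) (j₀+1) ≤ K i (j₀+1) := by
        rcases lt_or_ge (K i (j₀+1)) (m:ℤ) with hc | hc
        · have hub := hf2 i (j₀+1) hi (by omega) hjn hc
          have hrs2 : ∑ t ∈ Icc i (j₀+1), K i t
              = K i i + (∑ t ∈ Icc (i+1) j₀, K i t + K i (j₀+1)) := by
            rw [sum_split (fun t => K i t) (a := i) (b := i) (c := j₀+1) (by omega) (by omega)]
            rw [Finset.Icc_self, Finset.sum_singleton]
            rw [sum_split (fun t => K i t) (a := i+1) (b := j₀) (c := j₀+1) (by omega) (by omega)]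
            rw [Finset.Icc_self, Finset.sum_singleton]
          have hrs3 : ∑ t ∈ Icc (i+1) (j₀+1), K (i+1) t
              = ∑ t ∈ Icc (i+1) j₀, K (i+1) t + K (i+1) (j₀+1) := by
            rw [sum_split (fun t => K (i+1) t) (a := i+1) (b := j₀) (c := j₀+1) (by omega) (by omega)]
            rw [Finset.Icc_self, Finset.sum_singleton]
          have hcs2 : ∑ t ∈ Icc (i+1) (j₀+1), K t (j₀+1)
              = K (i+1) (j₀+1) + ∑ t ∈ Icc (i+1+1) (j₀+1), K t (j₀+1) := by
            rw [sum_split (fun t => K t (j₀+1)) (a := i+1) (b := i+1) (c := j₀+1) (by omega) (by omega)]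
            rw [Finset.Icc_self, Finset.sum_singleton]
          have hrowmono : ∑ t ∈ Icc (i+1) j₀, K (i+1) t
              ≤ ∑ t ∈ Icc (i+1) j₀, K i t := by
            apply Finset.sum_le_sum
            intro t ht; rw [mem_Icc] at ht
            exact Bfull i t hi (by omega) (by omega) (by omega) (i+1) (by omega) (by omega)
          have hKii : 0 ≤ K i i := (pos i i hi le_rfl (by omega)).1
          apply hf4 (i+1) (j₀+1) (by omega) (by omega) hjn
          have hHle : Hf K (i+1) (j₀+1)
              ≤ K i (j₀+1) * (((j₀+1:ℕ):ℤ) - i + 1) - K i (j₀+1) := by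
            unfold Hf at hub ⊢
            rw [hrs2, hcs2] at hub
            rw [hrs3]
            linarith
          push_cast at hHle ⊢
          linarith only [hHle]
        · exact le_trans (pos (i+1) (j₀+1) (by omega) (by omega) hjn).2 hc
      have B : ∀ t, i ≤ t → t ≤ j₀ + 1 → K t (j₀+1) ≤ K i (j₀+1) := by
        intro t h1 h2
        rcases Nat.eq_or_lt_of_le h1 with h3 | h3
        · rw [← h3]
        · exact le_trans (Bfull (i+1) (j₀+1) (by omega) (by omega) hjn (by omega) t (by omega) h2) mcol
      refine ⟨A, B, ?_⟩
      intro l h1 h2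
      have hlj0 : l ≤ j₀ := by omega
      have h1l : 1 ≤ l := by omega
      have ha0 : 0 ≤ K i l := (pos i l hi h1 (by omega)).1
      have hb0 : 0 ≤ K (l+1) (j₀+1) := (pos (l+1) (j₀+1) (by omega) (by omega) hjn).1
      have hc0 : K i (j₀+1) ≤ m := (pos i (j₀+1) hi (by omega) hjn).2
      -- sum decompositions
      have e1b : ∑ t ∈ Icc (l+1) (j₀+1), K i t
          = (∑ t ∈ Icc (l+1) j₀, K i t) + K i (j₀+1) := by
        rw [sum_split (fun t => K i t) (a := l+1) (b := j₀) (c := j₀+1) (by omega) (by omega)]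
        rw [Finset.Icc_self, Finset.sum_singleton]
      have e1 : ∑ t ∈ Icc i (j₀+1), K i t
          = (∑ t ∈ Icc i l, K i t) + ((∑ t ∈ Icc (l+1) j₀, K i t) + K i (j₀+1)) := by
        rw [sum_split (fun t => K i t) (a := i) (b := l) (c := j₀+1) (by omega) (by omega), e1b]
      have e2b : ∑ t ∈ Icc (l+1) (j₀+1), K t (j₀+1)
          = K (l+1) (j₀+1) + ∑ t ∈ Icc (l+1+1) (j₀+1), K t (j₀+1) := by
        rw [sum_split (fun t => K t (j₀+1)) (a := l+1) (b := l+1) (c := j₀+1) (by omega) (by omega)]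
        rw [Finset.Icc_self, Finset.sum_singleton]
      have e2 : ∑ t ∈ Icc (i+1) (j₀+1), K t (j₀+1)
          = (∑ t ∈ Icc (i+1) l, K t (j₀+1))
            + (K (l+1) (j₀+1) + ∑ t ∈ Icc (l+1+1) (j₀+1), K t (j₀+1)) := by
        rw [sum_split (fun t => K t (j₀+1)) (a := i+1) (b := l) (c := j₀+1) (by omega) (by omega), e2b]
      have e3 : ∑ t ∈ Icc (l+1) (j₀+1), K (l+1) t
          = (∑ t ∈ Icc (l+1) j₀, K (l+1) t) + K (l+1) (j₀+1) := by
        rw [sum_split (fun t => K (l+1) t) (a := l+1) (b := j₀) (c := j₀+1) (by omega) (by omega)]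
        rw [Finset.Icc_self, Finset.sum_singleton]
      -- Hf expressions
      have hHtop : Hf K i (j₀+1)
          = (∑ t ∈ Icc i l, K i t) + ((∑ t ∈ Icc (l+1) j₀, K i t) + K i (j₀+1))
            + ((∑ t ∈ Icc (i+1) l, K t (j₀+1))
              + (K (l+1) (j₀+1) + ∑ t ∈ Icc (l+1+1) (j₀+1), K t (j₀+1))) := by
        unfold Hf; rw [e1, e2]
      have hH1 : Hf K i l = (∑ t ∈ Icc i l, K i t) + ∑ t ∈ Icc (i+1) l, K t l := rfl
      have hH2 : Hf K (l+1) (j₀+1)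
          = ((∑ t ∈ Icc (l+1) j₀, K (l+1) t) + K (l+1) (j₀+1))
            + ∑ t ∈ Icc (l+1+1) (j₀+1), K t (j₀+1) := by
        unfold Hf; rw [e3]
      -- recursion facts
      have hf1top := hf1 i (j₀+1) hi (by omega) hjn
      have hf1a := hf1 i l hi h1 (by omega)
      have hf1b := hf1 (l+1) (j₀+1) (by omega) (by omega) hjn
      rw [hHtop] at hf1top
      rw [hH1] at hf1a
      rw [hH2] at hf1b
      have hf1top' := Int.add_one_le_iff.mpr hf1top
      have hf1a' := Int.add_one_le_iff.mpr hf1a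
      have hf1b' := Int.add_one_le_iff.mpr hf1b
      push_cast at hf1top' hf1a' hf1b'
      constructor
      · -- lower Shi bound : min m (a+b) ≤ c
        rcases le_or_gt (m:ℤ) (K i (j₀+1)) with hcm | hcm
        · exact le_trans (min_le_left _ _) hcm
        · -- c < m
          have hf2top := hf2 i (j₀+1) hi (by omega) hjn hcm
          rw [hHtop] at hf2top
          push_cast at hf2top
          have L3 : (∑ t ∈ Icc (l+1) j₀, K (l+1) t)
              + ((j₀ + 1 - (l+1) : ℕ) : ℤ) * K i l ≤ ∑ t ∈ Icc (l+1) j₀, K i t := by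
            apply sum_lb
            intro t ht1 ht2
            have hKtc : K i t ≤ K i (j₀+1) := A t (by omega) (by omega)
            have hlo := shiLo i l t hi h1 (by omega) (by omega) (by omega)
            have := min_lt_aux hlo (by linarith)
            linarith
          have L4 : (∑ t ∈ Icc (i+1) l, K t l)
              + ((l + 1 - (i+1) : ℕ) : ℤ) * K (l+1) (j₀+1) ≤ ∑ t ∈ Icc (i+1) l, K t (j₀+1) := by
            apply sum_lb
            intro t ht1 ht2
            have hKtc : K t (j₀+1) ≤ K i (j₀+1) := B t (by omega) (by omega)
            have hlo := shiLo t l (j₀+1) (by omega) ht2 (by omega) hjn (by omega)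
            have := min_lt_aux hlo (by linarith)
            linarith
          have hc1 : ((j₀ + 1 - (l+1) : ℕ) : ℤ) = (j₀:ℤ) - l := by omega
          have hc2 : ((l + 1 - (i+1) : ℕ) : ℤ) = (l:ℤ) - i := by omega
          rw [hc1] at L3
          rw [hc2] at L4
          -- conclude a + b ≤ c
          have hs : K i l + K (l+1) (j₀+1) ≤ K i (j₀+1) := by
            by_contra hcon
            push_neg at hcon
            have hcon' : K i (j₀+1) ≤ K i l + K (l+1) (j₀+1) - 1 := by omega
            have hprod : 0 ≤ (K i l + K (l+1) (j₀+1) - 1 - K i (j₀+1)) * ((j₀:ℤ) - i + 1) :=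
              mul_nonneg (by omega) (by omega)
            linarith only [hf2top, hf1a', hf1b', L3, L4, hprod]
          exact le_trans (min_le_right _ _) hs
      · -- upper Shi bound
        intro hslt
        have haltm : K i l < m := by omega
        have hbltm : K (l+1) (j₀+1) < m := by omega
        have hf2a := hf2 i l hi h1 (by omega) haltm
        have hf2b := hf2 (l+1) (j₀+1) (by omega) (by omega) hjn hbltm
        rw [hH1] at hf2a
        rw [hH2] at hf2b
        push_cast at hf2a hf2b
        have U3 : ∑ t ∈ Icc (l+1) j₀, K i t
            ≤ (∑ t ∈ Icc (l+1) j₀, K (l+1) t)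
              + ((j₀ + 1 - (l+1) : ℕ) : ℤ) * (K i l + 1) := by
          apply sum_ub
          intro t ht1 ht2
          have := shiUp i l t hi h1 (by omega) (by omega) (by omega)
          linarith
        have U4 : ∑ t ∈ Icc (i+1) l, K t (j₀+1)
            ≤ (∑ t ∈ Icc (i+1) l, K t l)
              + ((l + 1 - (i+1) : ℕ) : ℤ) * (K (l+1) (j₀+1) + 1) := by
          apply sum_ub
          intro t ht1 ht2
          have := shiUp t l (j₀+1) (by omega) ht2 (by omega) hjn (by omega)
          linarith
        have hc1 : ((j₀ + 1 - (l+1) : ℕ) : ℤ) = (j₀:ℤ) - l := by omega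
        have hc2 : ((l + 1 - (i+1) : ℕ) : ℤ) = (l:ℤ) - i := by omega
        rw [hc1] at U3
        rw [hc2] at U4
        by_contra hcon
        push_neg at hcon
        have hcon' : K i l + K (l+1) (j₀+1) + 2 ≤ K i (j₀+1) := by omega
        have hprod : 0 ≤ (K i (j₀+1) - (K i l + K (l+1) (j₀+1) + 2)) * ((j₀:ℤ) - i + 1) :=
          mul_nonneg (by omega) (by omega)
        linarith only [hf1top', hf2a, hf2b, U3, U4, hprod]

end Phase2


end ShiTabAux

/-- For every `lam ∈ P^m_n`, the recursively defined family `(k_{i,j}(lam))` is a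
type-A Shi tableau of size `(n,m)`. -/
theorem tableau_of_partition_isShi (n m : ℕ) (hn : 1 ≤ n) (hm : 1 ≤ m)
    (lam : ℕ → ℤ) (hlam : IsTypeAPartition n m lam)
    (K : ℕ → ℕ → ℤ) (hK : TableauRec n m lam K) :
    IsShiTableau n m K := by
  have hrows := ShiTabAux.rows hm hlam hK
  have pos : ∀ i j : ℕ, 1 ≤ i → i ≤ j → j ≤ n → 0 ≤ K i j ∧ K i j ≤ (m:ℤ) :=
    fun i j h1 h2 h3 => (hrows i h1 (h2.trans h3)).1 j h2 h3
  refine ⟨pos, ?_⟩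
  intro i l j h1 h2 h3 h4
  have hmain := ShiTabAux.phase2 hm hK hrows (j - i) i j h1 (by omega) h4 rfl
  have hshi := hmain.2.2 l h2 h3
  constructor
  · intro hlt
    have hlo := hshi.1
    have hup := hshi.2 hlt
    rw [min_eq_right (by omega : K i l + K (l+1) j ≤ (m:ℤ))] at hlo
    omega
  · intro hge
    have hlo := hshi.1
    rw [min_eq_left hge] at hlo
    have h5 := (pos i j h1 (by omega) h4).2
    omega
end

section
/- Let T = (k_{i,j})_{1≤i≤j≤n} be a type-A Shi tableau of size (n,m), and define λ_i = Σ_{j=i}^{n} k_{i,j} for 1 ≤ i ≤ n. Then λ = (λ_1, …, λ_n) belongs to P^m_n (i.e., λ is weakly decreasing and λ_i ≤ m(n−i+1) for all i), and k_{i,j}(λ) = k_{i,j} for all 1 ≤ i ≤ j ≤ n. -/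
/-- If `T = (k_{i,j})` is a type-A Shi tableau of size `(n,m)` and `lam_i = Σ_{j=i}^n k_{i,j}`,
then `lam ∈ P^m_n` and the recursively defined tableau of `lam` recovers `T`:
`k_{i,j}(lam) = k_{i,j}` for all `1 ≤ i ≤ j ≤ n`. -/
theorem shiTableau_rowSums_partition (n m : ℕ) (hn : 1 ≤ n) (hm : 1 ≤ m)
    (K : ℕ → ℕ → ℤ) (hK : IsShiTableau n m K) :
    IsTypeAPartition n m (fun i => ∑ j ∈ Finset.Icc i n, K i j) ∧
    ∀ K' : ℕ → ℕ → ℤ, TableauRec n m (fun i => ∑ j ∈ Finset.Icc i n, K i j) K' →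
      ∀ i j : ℕ, 1 ≤ i → i ≤ j → j ≤ n → K' i j = K i j := by
  obtain ⟨hbd, hshi⟩ := hK
  -- Core lemma: K itself satisfies the recursion for its own row sums.
  have core : ∀ i j : ℕ, 1 ≤ i → i ≤ j → j ≤ n →
      K i j = min (m : ℤ)
        ⌈((((∑ l ∈ Finset.Icc i n, K i l) - ∑ l ∈ Finset.Icc (j + 1) n, K i l
            + ∑ l ∈ Finset.Icc (i + 1) j, K l j : ℤ) : ℚ)
          / ((j : ℚ) - (i : ℚ) + 1))⌉ := by
    intro i j hi hij hjn
    obtain ⟨j', rfl⟩ : ∃ j', j = j' + 1 := ⟨j - 1, by omega⟩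
    -- split the row sum
    have hu : Finset.Icc i (j' + 1) ∪ Finset.Icc (j' + 1 + 1) n = Finset.Icc i n := by
      ext x
      simp only [Finset.mem_union, Finset.mem_Icc]
      omega
    have hd : Disjoint (Finset.Icc i (j' + 1)) (Finset.Icc (j' + 1 + 1) n) := by
      rw [Finset.disjoint_left]
      intro a ha hb
      simp only [Finset.mem_Icc] at ha hb
      omega
    have h1 : (∑ l ∈ Finset.Icc i n, K i l) - ∑ l ∈ Finset.Icc (j' + 1 + 1) n, K i l
        = ∑ l ∈ Finset.Icc i (j' + 1), K i l := by
      rw [← hu, Finset.sum_union hd]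
      ring
    have h3 : ∑ l ∈ Finset.Icc i (j' + 1), K i l
        = (∑ l ∈ Finset.Icc i j', K i l) + K i (j' + 1) :=
      Finset.sum_Icc_succ_top (by omega) _
    have h2 : ∑ l ∈ Finset.Icc (i + 1) (j' + 1), K l (j' + 1)
        = ∑ l ∈ Finset.Icc i j', K (l + 1) (j' + 1) := by
      have himg : Finset.Icc (i + 1) (j' + 1) = Finset.image (· + 1) (Finset.Icc i j') := by
        rw [Finset.image_add_right_Icc]
      rw [himg, Finset.sum_image (by intro a _ b _ h; simp only at h; omega)]
    have hN : (∑ l ∈ Finset.Icc i n, K i l) - (∑ l ∈ Finset.Icc (j' + 1 + 1) n, K i l)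
        + ∑ l ∈ Finset.Icc (i + 1) (j' + 1), K l (j' + 1)
        = (∑ l ∈ Finset.Icc i j', (K i l + K (l + 1) (j' + 1))) + K i (j' + 1) := by
      rw [h1, h3, h2, Finset.sum_add_distrib]
      ring
    set S : ℤ := ∑ l ∈ Finset.Icc i j', (K i l + K (l + 1) (j' + 1)) with hS
    set c : ℕ := (Finset.Icc i j').card with hcdef
    have hcard : (c : ℤ) = (j' : ℤ) + 1 - (i : ℤ) := by
      rw [hcdef, Nat.card_Icc]
      omega
    have hden : ((j' + 1 : ℕ) : ℚ) - (i : ℚ) + 1 = (c : ℚ) + 1 := by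
      have : ((c : ℤ) : ℚ) = ((j' : ℤ) : ℚ) + 1 - ((i : ℤ) : ℚ) := by
        exact_mod_cast congrArg (fun z : ℤ => (z : ℚ)) hcard
      push_cast at this ⊢
      linarith
    have hdpos : (0 : ℚ) < (c : ℚ) + 1 := by positivity
    rcases lt_or_ge (K i (j' + 1)) (m : ℤ) with hk | hk
    · -- K i j < m : every cross term lies in [k-1, k]
      have hterm : ∀ l ∈ Finset.Icc i j',
          K i (j' + 1) - 1 ≤ K i l + K (l + 1) (j' + 1) ∧
          K i l + K (l + 1) (j' + 1) ≤ K i (j' + 1) := by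
        intro l hl
        rw [Finset.mem_Icc] at hl
        obtain ⟨h01, hmb⟩ := hshi i l (j' + 1) hi hl.1 (by omega) hjn
        by_cases hcc : K i l + K (l + 1) (j' + 1) < (m : ℤ)
        · rcases h01 hcc with h | h <;> omega
        · have := hmb (by omega); omega
      have hlo : (c : ℤ) * (K i (j' + 1) - 1) ≤ S := by
        calc (c : ℤ) * (K i (j' + 1) - 1)
            = ∑ _l ∈ Finset.Icc i j', (K i (j' + 1) - 1) := by
              rw [Finset.sum_const, nsmul_eq_mul]
          _ ≤ S := Finset.sum_le_sum (fun l hl => (hterm l hl).1)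
      have hhi : S ≤ (c : ℤ) * K i (j' + 1) := by
        calc S ≤ ∑ _l ∈ Finset.Icc i j', K i (j' + 1) :=
              Finset.sum_le_sum (fun l hl => (hterm l hl).2)
          _ = (c : ℤ) * K i (j' + 1) := by rw [Finset.sum_const, nsmul_eq_mul]
      have hceil : ⌈(((S + K i (j' + 1) : ℤ) : ℚ)) / ((c : ℚ) + 1)⌉ = K i (j' + 1) := by
        rw [Int.ceil_eq_iff]
        constructor
        · rw [lt_div_iff₀ hdpos]
          have : ((c : ℤ) * (K i (j' + 1) - 1) : ℚ) ≤ ((S : ℤ) : ℚ) := by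
            exact_mod_cast hlo
          push_cast at this ⊢
          nlinarith [this]
        · rw [div_le_iff₀ hdpos]
          have : ((S : ℤ) : ℚ) ≤ ((c : ℤ) * K i (j' + 1) : ℚ) := by
            exact_mod_cast hhi
          push_cast at this ⊢
          nlinarith [this]
      rw [hN, hden, hceil, min_eq_right hk.le]
    · -- K i j = m
      have hkm : K i (j' + 1) = (m : ℤ) :=
        le_antisymm (hbd i (j' + 1) hi (by omega) hjn).2 hk
      have hterm : ∀ l ∈ Finset.Icc i j',
          (m : ℤ) - 1 ≤ K i l + K (l + 1) (j' + 1) := by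
        intro l hl
        rw [Finset.mem_Icc] at hl
        obtain ⟨h01, hmb⟩ := hshi i l (j' + 1) hi hl.1 (by omega) hjn
        by_cases hcc : K i l + K (l + 1) (j' + 1) < (m : ℤ)
        · rcases h01 hcc with h | h <;> omega
        · omega
      have hlo : (c : ℤ) * ((m : ℤ) - 1) ≤ S := by
        calc (c : ℤ) * ((m : ℤ) - 1)
            = ∑ _l ∈ Finset.Icc i j', ((m : ℤ) - 1) := by
              rw [Finset.sum_const, nsmul_eq_mul]
          _ ≤ S := Finset.sum_le_sum hterm
      have hceil : (m : ℤ) ≤ ⌈(((S + K i (j' + 1) : ℤ) : ℚ)) / ((c : ℚ) + 1)⌉ := by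
        have : ((m : ℤ) - 1) < ⌈(((S + K i (j' + 1) : ℤ) : ℚ)) / ((c : ℚ) + 1)⌉ := by
          rw [Int.lt_ceil, lt_div_iff₀ hdpos]
          have hS' : ((c : ℤ) * ((m : ℤ) - 1) : ℚ) ≤ ((S : ℤ) : ℚ) := by
            exact_mod_cast hlo
          have hk' : ((K i (j' + 1) : ℤ) : ℚ) = (m : ℚ) := by exact_mod_cast hkm
          push_cast at hS' ⊢
          nlinarith [hS', hk']
        omega
      rw [hN, hden, min_eq_left hceil, hkm]
  refine ⟨⟨?_, ?_⟩, ?_⟩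
  · -- bounds
    intro i h1i hin
    constructor
    · exact Finset.sum_nonneg fun j hj => by
        rw [Finset.mem_Icc] at hj
        exact (hbd i j h1i hj.1 hj.2).1
    · calc (∑ j ∈ Finset.Icc i n, K i j) ≤ ∑ _j ∈ Finset.Icc i n, (m : ℤ) :=
            Finset.sum_le_sum fun j hj => by
              rw [Finset.mem_Icc] at hj
              exact (hbd i j h1i hj.1 hj.2).2
        _ = ((Finset.Icc i n).card : ℤ) * (m : ℤ) := by
            rw [Finset.sum_const, nsmul_eq_mul]
        _ = (m : ℤ) * ((n : ℤ) - (i : ℤ) + 1) := by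
            rw [Nat.card_Icc]
            have : ((n + 1 - i : ℕ) : ℤ) = (n : ℤ) - (i : ℤ) + 1 := by omega
            rw [this]; ring
  · -- weakly decreasing
    intro i h1i hin
    have step : ∀ j ∈ Finset.Icc (i + 1) n, K (i + 1) j ≤ K i j := by
      intro j hj
      rw [Finset.mem_Icc] at hj
      obtain ⟨h01, hmb⟩ := hshi i i j h1i le_rfl (by omega) hj.2
      have h0 : 0 ≤ K i i := (hbd i i h1i le_rfl (by omega)).1
      have hb : K (i + 1) j ≤ (m : ℤ) := (hbd (i + 1) j (by omega) hj.1 hj.2).2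
      by_cases hcc : K i i + K (i + 1) j < (m : ℤ)
      · rcases h01 hcc with h | h <;> omega
      · have := hmb (by omega); omega
    calc (∑ j ∈ Finset.Icc (i + 1) n, K (i + 1) j)
        ≤ ∑ j ∈ Finset.Icc (i + 1) n, K i j := Finset.sum_le_sum step
      _ ≤ ∑ j ∈ Finset.Icc i n, K i j := by
          apply Finset.sum_le_sum_of_subset_of_nonneg
          · intro x hx
            rw [Finset.mem_Icc] at hx ⊢
            omega
          · intro x hx _
            rw [Finset.mem_Icc] at hx
            exact (hbd i x h1i hx.1 hx.2).1
  · -- uniqueness of the recursion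
    intro K' hrec
    have main : ∀ s : ℕ, ∀ i j : ℕ, 1 ≤ i → i ≤ j → j ≤ n → 2 * n ≤ i + j + s →
        K' i j = K i j := by
      intro s
      induction s using Nat.strong_induction_on with
      | _ s ih =>
        intro i j hi hij hjn hs
        have hrow : ∑ l ∈ Finset.Icc (j + 1) n, K' i l
            = ∑ l ∈ Finset.Icc (j + 1) n, K i l := by
          refine Finset.sum_congr rfl fun l hl => ?_
          rw [Finset.mem_Icc] at hl
          exact ih (s - 1) (by omega) i l hi (by omega) (by omega) (by omega)
        have hcol : ∑ l ∈ Finset.Icc (i + 1) j, K' l j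
            = ∑ l ∈ Finset.Icc (i + 1) j, K l j := by
          refine Finset.sum_congr rfl fun l hl => ?_
          rw [Finset.mem_Icc] at hl
          exact ih (s - 1) (by omega) l j (by omega) hl.2 hjn (by omega)
        have := hrec i j hi hij hjn
        simp only at this
        rw [this, hrow, hcol, ← core i j hi hij hjn]
    exact fun i j hi hij hjn => main (2 * n) i j hi hij hjn (by omega)
end
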